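/- arXiv:2001.03720 — 9 statements merged into one kernel-verified Lean document; each statement's English description precedes it below -/
import Mathlib

section
/- Every bounded set X in the Euclidean plane ℝ² of diameter d can be written as a union of three subsets, each of diameter at most (√3/2)·d. -/
open Real Set Bornology

private lemma pentball (d P R : ℝ)
    (h1 : P ≤ d/2) (h2 : -(d/2) ≤ P)
    (h3 : P + R ≤ d) (h5 : P - R ≤ d) (h6 : -d ≤ P - R) (h7 : 0 ≤ 3*P + R) (h8 : 0 ≤ R) :
    (P - d/8)^2 + (R - 3*d/8)^2/3 ≤ 3/16*d^2 := by
  rcases le_total (P + R) (d/2) with hl | hl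
  · nlinarith [mul_nonneg (sub_nonneg.2 hl) h8, mul_nonneg (sub_nonneg.2 hl) h7,
      sq_nonneg (P + R - d/2), mul_nonneg h8 h7]
  · nlinarith [mul_nonneg (sub_nonneg.2 (show d/2 - P ≥ 0 by linarith)) (show (0:ℝ) ≤ (d + P - R)/2 by linarith),
      mul_nonneg h7 h8, mul_nonneg (sub_nonneg.2 hl) (show (0:ℝ) ≤ (d - P - R)/2 by linarith)]

private lemma pentdist (d P₁ R₁ P₂ R₂ : ℝ)
    (h11 : P₁ ≤ d/2) (h12 : -(d/2) ≤ P₁) (h13 : P₁ + R₁ ≤ d) (h14 : -d ≤ P₁ + R₁)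
    (h15 : P₁ - R₁ ≤ d) (h16 : -d ≤ P₁ - R₁) (h17 : 0 ≤ 3*P₁ + R₁) (h18 : 0 ≤ R₁)
    (h21 : P₂ ≤ d/2) (h22 : -(d/2) ≤ P₂) (h23 : P₂ + R₂ ≤ d) (h24 : -d ≤ P₂ + R₂)
    (h25 : P₂ - R₂ ≤ d) (h26 : -d ≤ P₂ - R₂) (h27 : 0 ≤ 3*P₂ + R₂) (h28 : 0 ≤ R₂) :
    (P₁ - P₂)^2 + (R₁ - R₂)^2/3 ≤ 3/4*d^2 := by
  have B1 := pentball d P₁ R₁ h11 h12 h13 h15 h16 h17 h18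
  have B2 := pentball d P₂ R₂ h21 h22 h23 h25 h26 h27 h28
  nlinarith [sq_nonneg (P₁ + P₂ - d/4), sq_nonneg (R₁ + R₂ - 3*d/4)]

private lemma dist_coord (x y : EuclideanSpace ℝ (Fin 2)) :
    dist x y = Real.sqrt ((x 0 - y 0)^2 + (x 1 - y 1)^2) := by
  rw [EuclideanSpace.dist_eq, Fin.sum_univ_two]
  simp [Real.dist_eq, sq_abs]

private noncomputable def sfn (X : Set (EuclideanSpace ℝ (Fin 2))) (φ : ℝ) : ℝ :=
  sSup ((fun x : EuclideanSpace ℝ (Fin 2) => Real.cos φ * x 0 + Real.sin φ * x 1) '' X)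

private lemma coord_bound {X : Set (EuclideanSpace ℝ (Fin 2))} (hX : IsBounded X) :
    ∃ r : ℝ, 0 ≤ r ∧ ∀ x ∈ X, |x 0| ≤ r ∧ |x 1| ≤ r := by
  obtain ⟨r, hr⟩ := hX.subset_closedBall 0
  refine ⟨max r 0, le_max_right _ _, fun x hx => ?_⟩
  have hd : dist x 0 ≤ r := Metric.mem_closedBall.1 (hr hx)
  have he : dist x 0 = Real.sqrt ((x 0 - 0)^2 + (x 1 - 0)^2) := by
    rw [dist_coord]; norm_num
  constructor
  · calc |x 0| = Real.sqrt ((x 0)^2) := (Real.sqrt_sq_eq_abs _).symm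
      _ ≤ Real.sqrt ((x 0 - 0)^2 + (x 1 - 0)^2) := Real.sqrt_le_sqrt (by nlinarith [sq_nonneg (x 1)])
      _ ≤ max r 0 := by rw [← he]; exact hd.trans (le_max_left _ _)
  · calc |x 1| = Real.sqrt ((x 1)^2) := (Real.sqrt_sq_eq_abs _).symm
      _ ≤ Real.sqrt ((x 0 - 0)^2 + (x 1 - 0)^2) := Real.sqrt_le_sqrt (by nlinarith [sq_nonneg (x 0)])
      _ ≤ max r 0 := by rw [← he]; exact hd.trans (le_max_left _ _)

private lemma sfn_bdd {X : Set (EuclideanSpace ℝ (Fin 2))} {r : ℝ}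
    (hr : ∀ x ∈ X, |x 0| ≤ r ∧ |x 1| ≤ r) (φ : ℝ) :
    BddAbove ((fun x : EuclideanSpace ℝ (Fin 2) => Real.cos φ * x 0 + Real.sin φ * x 1) '' X) := by
  refine ⟨r + r, ?_⟩
  rintro _ ⟨x, hx, rfl⟩
  dsimp only
  obtain ⟨h0, h1⟩ := hr x hx
  have c0 := Real.abs_cos_le_one φ
  have c1 := Real.abs_sin_le_one φ
  have e0 : Real.cos φ * x 0 ≤ r := by
    calc Real.cos φ * x 0 ≤ |Real.cos φ * x 0| := le_abs_self _
      _ = |Real.cos φ| * |x 0| := abs_mul _ _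
      _ ≤ 1 * r := mul_le_mul c0 h0 (abs_nonneg _) zero_le_one
      _ = r := one_mul r
  have e1 : Real.sin φ * x 1 ≤ r := by
    calc Real.sin φ * x 1 ≤ |Real.sin φ * x 1| := le_abs_self _
      _ = |Real.sin φ| * |x 1| := abs_mul _ _
      _ ≤ 1 * r := mul_le_mul c1 h1 (abs_nonneg _) zero_le_one
      _ = r := one_mul r
  linarith

private lemma sfn_le {X : Set (EuclideanSpace ℝ (Fin 2))} {r : ℝ}
    (hr : ∀ x ∈ X, |x 0| ≤ r ∧ |x 1| ≤ r) (φ : ℝ) {x : EuclideanSpace ℝ (Fin 2)} (hx : x ∈ X) :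
    Real.cos φ * x 0 + Real.sin φ * x 1 ≤ sfn X φ :=
  le_csSup (sfn_bdd hr φ) ⟨x, hx, rfl⟩

private lemma cs_bound (φ : ℝ) (x y : EuclideanSpace ℝ (Fin 2)) :
    (Real.cos φ * x 0 + Real.sin φ * x 1) - (Real.cos φ * y 0 + Real.sin φ * y 1) ≤ dist x y := by
  rw [dist_coord]
  set a := x 0 - y 0 with ha
  set b := x 1 - y 1 with hb
  have he : (Real.cos φ * x 0 + Real.sin φ * x 1) - (Real.cos φ * y 0 + Real.sin φ * y 1)
      = Real.cos φ * a + Real.sin φ * b := by rw [ha, hb]; ring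
  rw [he]
  rcases le_total (Real.cos φ * a + Real.sin φ * b) 0 with h | h
  · exact h.trans (Real.sqrt_nonneg _)
  · rw [show Real.cos φ * a + Real.sin φ * b = Real.sqrt ((Real.cos φ * a + Real.sin φ * b)^2) from (Real.sqrt_sq h).symm]
    apply Real.sqrt_le_sqrt
    nlinarith [Real.sin_sq_add_cos_sq φ, sq_nonneg (Real.sin φ * a - Real.cos φ * b)]

private lemma sfn_pair {X : Set (EuclideanSpace ℝ (Fin 2))} (hX : IsBounded X) (hne : X.Nonempty)
    {r : ℝ} (hr : ∀ x ∈ X, |x 0| ≤ r ∧ |x 1| ≤ r) (φ : ℝ) :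
    sfn X φ + sfn X (φ + π) ≤ Metric.diam X := by
  have key : sfn X φ ≤ Metric.diam X - sfn X (φ + π) := by
    apply csSup_le (hne.image _)
    rintro _ ⟨x, hx, rfl⟩
    dsimp only
    rw [le_sub_iff_add_le, add_comm, ← le_sub_iff_add_le]
    apply csSup_le (hne.image _)
    rintro _ ⟨y, hy, rfl⟩
    dsimp only
    have hc : Real.cos (φ + π) = -Real.cos φ := Real.cos_add_pi φ
    have hs : Real.sin (φ + π) = -Real.sin φ := Real.sin_add_pi φ
    rw [hc, hs]
    have := cs_bound φ x y
    have hd : dist x y ≤ Metric.diam X := Metric.dist_le_diam_of_mem hX hx hy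
    linarith
  linarith

private lemma sfn_cont {X : Set (EuclideanSpace ℝ (Fin 2))} (hne : X.Nonempty)
    {r : ℝ} (hr0 : 0 ≤ r) (hr : ∀ x ∈ X, |x 0| ≤ r ∧ |x 1| ≤ r) :
    Continuous (sfn X) := by
  have key : ∀ a b : ℝ, sfn X a ≤ sfn X b + 2*r*|a - b| := by
    intro a b
    apply csSup_le (hne.image _)
    rintro _ ⟨x, hx, rfl⟩
    dsimp only
    obtain ⟨h0, h1⟩ := hr x hx
    have hb := sfn_le hr b hx
    have l0 : (Real.cos a - Real.cos b) * x 0 ≤ |a - b| * r := by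
      calc (Real.cos a - Real.cos b) * x 0 ≤ |(Real.cos a - Real.cos b) * x 0| := le_abs_self _
        _ = |Real.cos a - Real.cos b| * |x 0| := abs_mul _ _
        _ ≤ |a - b| * r := mul_le_mul (by
            have h1 := Real.cos_sub_cos a b
            have := Real.abs_sin_le_abs (x := (a-b)/2)
            have := Real.abs_sin_le_one ((a+b)/2)
            have h4 : |Real.cos a - Real.cos b| = 2 * |Real.sin ((a+b)/2)| * |Real.sin ((a-b)/2)| := by
              rw [h1, abs_mul, abs_mul]; norm_num
            have h5 : |(a-b)/2| = |a-b|/2 := by rw [abs_div]; norm_num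
            nlinarith [abs_nonneg (Real.sin ((a-b)/2)), abs_nonneg (a-b)]) h0 (abs_nonneg _) (abs_nonneg _)
    have l1 : (Real.sin a - Real.sin b) * x 1 ≤ |a - b| * r := by
      calc (Real.sin a - Real.sin b) * x 1 ≤ |(Real.sin a - Real.sin b) * x 1| := le_abs_self _
        _ = |Real.sin a - Real.sin b| * |x 1| := abs_mul _ _
        _ ≤ |a - b| * r := mul_le_mul (by
            have h1 := Real.sin_sub_sin a b
            have := Real.abs_sin_le_abs (x := (a-b)/2)
            have := Real.abs_cos_le_one ((a+b)/2)
            have h4 : |Real.sin a - Real.sin b| = 2 * |Real.sin ((a-b)/2)| * |Real.cos ((a+b)/2)| := by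
              rw [h1, abs_mul, abs_mul]; norm_num
            have h5 : |(a-b)/2| = |a-b|/2 := by rw [abs_div]; norm_num
            nlinarith [abs_nonneg (Real.sin ((a-b)/2)), abs_nonneg (a-b), abs_nonneg (Real.cos ((a+b)/2))]) h1 (abs_nonneg _) (abs_nonneg _)
    calc Real.cos a * x 0 + Real.sin a * x 1
        = (Real.cos b * x 0 + Real.sin b * x 1) + ((Real.cos a - Real.cos b) * x 0 + (Real.sin a - Real.sin b) * x 1) := by ring
      _ ≤ sfn X b + 2*r*|a - b| := by
          have habs : |a - b| * r + |a - b| * r = 2*r*|a-b| := by ring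
          linarith
  have hlip : LipschitzWith (Real.toNNReal (2*r)) (sfn X) := by
    apply LipschitzWith.of_dist_le_mul
    intro a b
    rw [Real.dist_eq, Real.dist_eq, Real.coe_toNNReal _ (by positivity)]
    rw [abs_sub_le_iff]
    constructor
    · have := key a b; linarith
    · have := key b a; rw [abs_sub_comm] at this; linarith
  exact hlip.continuous

private lemma sfn_per (X : Set (EuclideanSpace ℝ (Fin 2))) (φ : ℝ) :
    sfn X (φ + 2*π) = sfn X φ := by
  unfold sfn
  have : (fun x : EuclideanSpace ℝ (Fin 2) => Real.cos (φ + 2*π) * x 0 + Real.sin (φ + 2*π) * x 1)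
      = fun x : EuclideanSpace ℝ (Fin 2) => Real.cos φ * x 0 + Real.sin φ * x 1 := by
    funext x
    rw [Real.cos_add_two_pi, Real.sin_add_two_pi]
  rw [this]

private lemma exists_theta {X : Set (EuclideanSpace ℝ (Fin 2))} (hX : IsBounded X) (hne : X.Nonempty)
    {r : ℝ} (hr0 : 0 ≤ r) (hr : ∀ x ∈ X, |x 0| ≤ r ∧ |x 1| ≤ r) :
    ∃ θ : ℝ, sfn X θ + sfn X (θ + 2*π/3) + sfn X (θ + 4*π/3) ≤ 3/2 * Metric.diam X ∧
      sfn X (θ + π/3) + sfn X (θ + π) + sfn X (θ + 5*π/3) ≤ 3/2 * Metric.diam X := by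
  have sfn_cont' := sfn_cont hne hr0 hr
  set ψ : ℝ → ℝ := fun φ => sfn X φ + sfn X (φ + 2*π/3) + sfn X (φ + 4*π/3)
      - (sfn X (φ + π/3) + sfn X (φ + π) + sfn X (φ + 5*π/3)) with hψ
  have hc1 : ∀ c : ℝ, Continuous (fun φ : ℝ => sfn X (φ + c)) :=
    fun c => sfn_cont'.comp (continuous_add_right c)
  have hcont : Continuous ψ := by
    refine Continuous.sub ?_ ?_
    · exact (sfn_cont'.add (hc1 _)).add (hc1 _)
    · exact ((hc1 _).add (hc1 _)).add (hc1 _)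
  have hanti : ∀ φ : ℝ, ψ (φ + π/3) = -ψ φ := by
    intro φ
    have e1 : φ + π/3 + 2*π/3 = φ + π := by ring
    have e2 : φ + π/3 + 4*π/3 = φ + 5*π/3 := by ring
    have e3 : φ + π/3 + π/3 = φ + 2*π/3 := by ring
    have e4 : φ + π/3 + π = φ + 4*π/3 := by ring
    have e5 : φ + π/3 + 5*π/3 = φ + 2*π := by ring
    simp only [hψ]
    rw [e1, e2, e3, e4, e5, sfn_per X φ]
    ring
  have hex : ∃ θ, ψ θ = 0 := by
    have hπ : (0:ℝ) ≤ π/3 := by positivity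
    rcases le_total (ψ 0) 0 with h0 | h0
    · have h1 : 0 ≤ ψ (π/3) := by rw [show (π/3 : ℝ) = 0 + π/3 by ring, hanti 0]; linarith
      obtain ⟨θ, _, hθ⟩ := intermediate_value_Icc hπ hcont.continuousOn ⟨h0, h1⟩
      exact ⟨θ, hθ⟩
    · have h1 : ψ (π/3) ≤ 0 := by rw [show (π/3 : ℝ) = 0 + π/3 by ring, hanti 0]; linarith
      obtain ⟨θ, _, hθ⟩ := intermediate_value_Icc' hπ hcont.continuousOn ⟨h1, h0⟩
      exact ⟨θ, hθ⟩
  obtain ⟨θ, hθ⟩ := hex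
  have p1 := sfn_pair hX hne hr θ
  have p2 := sfn_pair hX hne hr (θ + π/3)
  have p3 := sfn_pair hX hne hr (θ + 2*π/3)
  rw [show θ + π/3 + π = θ + 4*π/3 by ring] at p2
  rw [show θ + 2*π/3 + π = θ + 5*π/3 by ring] at p3
  have hψθ : sfn X θ + sfn X (θ + 2*π/3) + sfn X (θ + 4*π/3)
      = sfn X (θ + π/3) + sfn X (θ + π) + sfn X (θ + 5*π/3) := by
    have := hθ; simp only [hψ] at this; linarith
  exact ⟨θ, by linarith, by linarith⟩
private lemma sqrt_step {d v : ℝ} (hd0 : 0 ≤ d) (h : v ≤ 3/4*d^2) :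
    Real.sqrt v ≤ Real.sqrt 3/2*d := by
  have h2 : (Real.sqrt 3/2*d)^2 = 3/4*d^2 := by
    rw [mul_pow, div_pow, Real.sq_sqrt (by norm_num : (0:ℝ) ≤ 3)]; ring
  calc Real.sqrt v ≤ Real.sqrt (3/4*d^2) := Real.sqrt_le_sqrt h
    _ = Real.sqrt 3/2*d := by rw [← h2, Real.sqrt_sq (by positivity)]

private noncomputable def Pf (θ a : ℝ) (x : EuclideanSpace ℝ (Fin 2)) : ℝ :=
  Real.cos θ * x 0 + Real.sin θ * x 1 - a

private noncomputable def Rf (θ t : ℝ) (x : EuclideanSpace ℝ (Fin 2)) : ℝ :=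
  Real.sqrt 3 * (-Real.sin θ * x 0 + Real.cos θ * x 1) - t

set_option maxHeartbeats 1000000 in
/-- Bonnesen–Fenchel: every bounded planar set of diameter d can be written as a
union of three subsets, each of diameter at most (√3/2)·d. -/
theorem planar_borsuk_with_sqrt3_div_two
    (X : Set (EuclideanSpace ℝ (Fin 2))) (hX : Bornology.IsBounded X) :
    ∃ X₁ X₂ X₃ : Set (EuclideanSpace ℝ (Fin 2)),
      X = X₁ ∪ X₂ ∪ X₃ ∧
      Metric.diam X₁ ≤ (Real.sqrt 3 / 2) * Metric.diam X ∧
      Metric.diam X₂ ≤ (Real.sqrt 3 / 2) * Metric.diam X ∧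
      Metric.diam X₃ ≤ (Real.sqrt 3 / 2) * Metric.diam X := by
  rcases Set.eq_empty_or_nonempty X with rfl | hne
  · exact ⟨∅, ∅, ∅, by simp, by simp [Metric.diam_empty],
      by simp [Metric.diam_empty], by simp [Metric.diam_empty]⟩
  obtain ⟨r, hr0, hr⟩ := coord_bound hX
  obtain ⟨θ, hF1, hF2⟩ := exists_theta hX hne hr0 hr
  set d := Metric.diam X with hdd
  have hd0 : 0 ≤ d := Metric.diam_nonneg
  -- trig values
  have c23 : Real.cos (2*π/3) = -(1/2) := by
    rw [show (2*π/3:ℝ) = π - π/3 by ring, Real.cos_pi_sub, Real.cos_pi_div_three]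
  have s23 : Real.sin (2*π/3) = Real.sqrt 3/2 := by
    rw [show (2*π/3:ℝ) = π - π/3 by ring, Real.sin_pi_sub, Real.sin_pi_div_three]
  have c43 : Real.cos (4*π/3) = -(1/2) := by
    rw [show (4*π/3:ℝ) = π/3 + π by ring, Real.cos_add_pi, Real.cos_pi_div_three]
  have s43 : Real.sin (4*π/3) = -(Real.sqrt 3/2) := by
    rw [show (4*π/3:ℝ) = π/3 + π by ring, Real.sin_add_pi, Real.sin_pi_div_three]
  have c53 : Real.cos (5*π/3) = 1/2 := by
    rw [show (5*π/3:ℝ) = 2*π/3 + π by ring, Real.cos_add_pi, c23]; norm_num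
  have s53 : Real.sin (5*π/3) = -(Real.sqrt 3/2) := by
    rw [show (5*π/3:ℝ) = 2*π/3 + π by ring, Real.sin_add_pi, s23]
  -- six support bounds, in rotated coordinates A = cosθ·x₀+sinθ·x₁, B = -sinθ·x₀+cosθ·x₁
  have hsup0 : ∀ x ∈ X, Real.cos θ * x 0 + Real.sin θ * x 1 ≤ sfn X θ :=
    fun x hx => sfn_le hr θ hx
  have hsup3 : ∀ x ∈ X, -(Real.cos θ * x 0 + Real.sin θ * x 1) ≤ sfn X (θ + π) := by
    intro x hx
    have h := sfn_le hr (θ + π) hx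
    rw [Real.cos_add_pi, Real.sin_add_pi] at h
    linarith
  have hsup1 : ∀ x ∈ X, (Real.cos θ * x 0 + Real.sin θ * x 1)/2
      + Real.sqrt 3/2 * (-Real.sin θ * x 0 + Real.cos θ * x 1) ≤ sfn X (θ + π/3) := by
    intro x hx
    have h := sfn_le hr (θ + π/3) hx
    rw [Real.cos_add, Real.sin_add, Real.cos_pi_div_three, Real.sin_pi_div_three] at h
    linarith
  have hsup4 : ∀ x ∈ X, -((Real.cos θ * x 0 + Real.sin θ * x 1)/2
      + Real.sqrt 3/2 * (-Real.sin θ * x 0 + Real.cos θ * x 1)) ≤ sfn X (θ + 4*π/3) := by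
    intro x hx
    have h := sfn_le hr (θ + 4*π/3) hx
    rw [Real.cos_add, Real.sin_add, c43, s43] at h
    linarith
  have hsup2 : ∀ x ∈ X, -((Real.cos θ * x 0 + Real.sin θ * x 1)/2)
      + Real.sqrt 3/2 * (-Real.sin θ * x 0 + Real.cos θ * x 1) ≤ sfn X (θ + 2*π/3) := by
    intro x hx
    have h := sfn_le hr (θ + 2*π/3) hx
    rw [Real.cos_add, Real.sin_add, c23, s23] at h
    linarith
  have hsup5 : ∀ x ∈ X, (Real.cos θ * x 0 + Real.sin θ * x 1)/2
      - Real.sqrt 3/2 * (-Real.sin θ * x 0 + Real.cos θ * x 1) ≤ sfn X (θ + 5*π/3) := by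
    intro x hx
    have h := sfn_le hr (θ + 5*π/3) hx
    rw [Real.cos_add, Real.sin_add, c53, s53] at h
    linarith
  -- abbreviate support values
  set H0 := sfn X θ with hH0
  set H1 := sfn X (θ + π/3) with hH1
  set H2 := sfn X (θ + 2*π/3) with hH2
  set H3 := sfn X (θ + π) with hH3
  set H4 := sfn X (θ + 4*π/3) with hH4
  set H5 := sfn X (θ + 5*π/3) with hH5
  have p1 : H0 + H3 ≤ d := sfn_pair hX hne hr θ
  have p2 : H1 + H4 ≤ d := by
    have := sfn_pair hX hne hr (θ + π/3)
    rw [show θ + π/3 + π = θ + 4*π/3 by ring] at this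
    exact this
  have p3 : H2 + H5 ≤ d := by
    have := sfn_pair hX hne hr (θ + 2*π/3)
    rw [show θ + 2*π/3 + π = θ + 5*π/3 by ring] at this
    exact this
  -- choose the center parameters
  set sAB := max (H1 - d/2) (H0 - d/2 + (H2 - d/2)) with hsABdef
  set a := max (H0 - d/2) (sAB - (d/2 - H5)) with hadef
  set b := sAB - a with hbdef
  have hsL : H1 - d/2 ≤ sAB := le_max_left _ _
  have hsL2 : H0 - d/2 + (H2 - d/2) ≤ sAB := le_max_right _ _
  have hsU : sAB ≤ d/2 - H4 := max_le (by linarith) (by linarith)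
  have hsU2 : sAB ≤ (d/2 - H3) + (d/2 - H5) := max_le (by linarith) (by linarith)
  have haL : H0 - d/2 ≤ a := le_max_left _ _
  have haL2 : sAB - (d/2 - H5) ≤ a := le_max_right _ _
  have haU : a ≤ d/2 - H3 := max_le (by linarith) (by linarith)
  have hbL : H2 - d/2 ≤ b := by
    have : a ≤ sAB - (H2 - d/2) := max_le (by linarith) (by linarith)
    simp only [hbdef]; linarith
  have hbU : b ≤ d/2 - H5 := by simp only [hbdef]; linarith
  have hab : a + b = sAB := by simp only [hbdef]; ring
  -- centered coordinates
  -- hexagon constraints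
  have key : ∀ x ∈ X, Pf θ a x ≤ d/2 ∧ -(d/2) ≤ Pf θ a x ∧ Pf θ a x + Rf θ (2*b+a) x ≤ d ∧ -d ≤ Pf θ a x + Rf θ (2*b+a) x
      ∧ Pf θ a x - Rf θ (2*b+a) x ≤ d ∧ -d ≤ Pf θ a x - Rf θ (2*b+a) x := by
    intro x hx
    have k0 := hsup0 x hx
    have k1 := hsup1 x hx
    have k2 := hsup2 x hx
    have k3 := hsup3 x hx
    have k4 := hsup4 x hx
    have k5 := hsup5 x hx
    simp only [Pf, Rf]
    refine ⟨by linarith, by linarith, by linarith, by linarith, by linarith, by linarith⟩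
  -- the three pieces
  refine ⟨{x | x ∈ X ∧ (0 ≤ 3*Pf θ a x + Rf θ (2*b+a) x ∧ 0 ≤ Rf θ (2*b+a) x)},
      {x | x ∈ X ∧ (0 ≤ -(3*Pf θ a x) + Rf θ (2*b+a) x ∧ 0 ≤ -(3*Pf θ a x) - Rf θ (2*b+a) x)},
      {x | x ∈ X ∧ (Rf θ (2*b+a) x ≤ 0 ∧ 0 ≤ 3*Pf θ a x - Rf θ (2*b+a) x)}, ?_, ?_, ?_, ?_⟩
  · ext x
    simp only [Set.mem_union, Set.mem_setOf_eq]
    constructor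
    · intro hx
      rcases le_total 0 (Rf θ (2*b+a) x) with hR0 | hR0
      · rcases le_total 0 (3*Pf θ a x + Rf θ (2*b+a) x) with h | h
        · exact Or.inl (Or.inl ⟨hx, h, hR0⟩)
        · exact Or.inl (Or.inr ⟨hx, by linarith, by linarith⟩)
      · rcases le_total 0 (3*Pf θ a x - Rf θ (2*b+a) x) with h | h
        · exact Or.inr ⟨hx, hR0, h⟩
        · exact Or.inl (Or.inr ⟨hx, by linarith, by linarith⟩)
    · rintro ((⟨hx, _⟩ | ⟨hx, _⟩) | ⟨hx, _⟩) <;> exact hx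
  -- piece 1
  · apply Metric.diam_le_of_forall_dist_le (mul_nonneg (by positivity) hd0)
    rintro x ⟨hxX, hx1, hx2⟩ y ⟨hyX, hy1, hy2⟩
    obtain ⟨a1, a2, a3, a4, a5, a6⟩ := key x hxX
    obtain ⟨b1, b2, b3, b4, b5, b6⟩ := key y hyX
    have hp := pentdist d (Pf θ a x) (Rf θ (2*b+a) x) (Pf θ a y) (Rf θ (2*b+a) y) a1 a2 a3 a4 a5 a6 hx1 hx2
      b1 b2 b3 b4 b5 b6 hy1 hy2
    have hsq : (x 0 - y 0)^2 + (x 1 - y 1)^2 = (Pf θ a x - Pf θ a y)^2 + (Rf θ (2*b+a) x - Rf θ (2*b+a) y)^2/3 := by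
      simp only [Pf, Rf]
      have h3 : Real.sqrt 3 ^ 2 = 3 := Real.sq_sqrt (by norm_num)
      have hcs : Real.cos θ^2 + Real.sin θ^2 = 1 := Real.cos_sq_add_sin_sq θ
      linear_combination (-((x 0 - y 0)^2 + (x 1 - y 1)^2)) * hcs
        - ((-Real.sin θ*(x 0 - y 0) + Real.cos θ*(x 1 - y 1))^2/3) * h3
    rw [dist_coord]
    apply sqrt_step hd0
    rw [hsq]
    linarith [hp]
  -- piece 2
  · apply Metric.diam_le_of_forall_dist_le (mul_nonneg (by positivity) hd0)
    rintro x ⟨hxX, hx1, hx2⟩ y ⟨hyX, hy1, hy2⟩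
    obtain ⟨a1, a2, a3, a4, a5, a6⟩ := key x hxX
    obtain ⟨b1, b2, b3, b4, b5, b6⟩ := key y hyX
    have hp := pentdist d ((Rf θ (2*b+a) x - Pf θ a x)/2) (-(3*Pf θ a x + Rf θ (2*b+a) x)/2) ((Rf θ (2*b+a) y - Pf θ a y)/2) (-(3*Pf θ a y + Rf θ (2*b+a) y)/2)
      (by linarith) (by linarith) (by linarith) (by linarith) (by linarith) (by linarith)
      (by linarith) (by linarith) (by linarith) (by linarith) (by linarith) (by linarith)
      (by linarith) (by linarith) (by linarith) (by linarith)
    have hsq : (x 0 - y 0)^2 + (x 1 - y 1)^2 = (Pf θ a x - Pf θ a y)^2 + (Rf θ (2*b+a) x - Rf θ (2*b+a) y)^2/3 := by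
      simp only [Pf, Rf]
      have h3 : Real.sqrt 3 ^ 2 = 3 := Real.sq_sqrt (by norm_num)
      have hcs : Real.cos θ^2 + Real.sin θ^2 = 1 := Real.cos_sq_add_sin_sq θ
      linear_combination (-((x 0 - y 0)^2 + (x 1 - y 1)^2)) * hcs
        - ((-Real.sin θ*(x 0 - y 0) + Real.cos θ*(x 1 - y 1))^2/3) * h3
    rw [dist_coord]
    apply sqrt_step hd0
    rw [hsq]
    linarith [hp]
  -- piece 3
  · apply Metric.diam_le_of_forall_dist_le (mul_nonneg (by positivity) hd0)
    rintro x ⟨hxX, hx1, hx2⟩ y ⟨hyX, hy1, hy2⟩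
    obtain ⟨a1, a2, a3, a4, a5, a6⟩ := key x hxX
    obtain ⟨b1, b2, b3, b4, b5, b6⟩ := key y hyX
    have hp := pentdist d (-(Pf θ a x + Rf θ (2*b+a) x)/2) ((3*Pf θ a x - Rf θ (2*b+a) x)/2) (-(Pf θ a y + Rf θ (2*b+a) y)/2) ((3*Pf θ a y - Rf θ (2*b+a) y)/2)
      (by linarith) (by linarith) (by linarith) (by linarith) (by linarith) (by linarith)
      (by linarith) (by linarith) (by linarith) (by linarith) (by linarith) (by linarith)
      (by linarith) (by linarith) (by linarith) (by linarith)
    have hsq : (x 0 - y 0)^2 + (x 1 - y 1)^2 = (Pf θ a x - Pf θ a y)^2 + (Rf θ (2*b+a) x - Rf θ (2*b+a) y)^2/3 := by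
      simp only [Pf, Rf]
      have h3 : Real.sqrt 3 ^ 2 = 3 := Real.sq_sqrt (by norm_num)
      have hcs : Real.cos θ^2 + Real.sin θ^2 = 1 := Real.cos_sq_add_sin_sq θ
      linear_combination (-((x 0 - y 0)^2 + (x 1 - y 1)^2)) * hcs
        - ((-Real.sin θ*(x 0 - y 0) + Real.cos θ*(x 1 - y 1))^2/3) * h3
    rw [dist_coord]
    apply sqrt_step hd0
    rw [hsq]
    linarith [hp]
end

section
/- Every n-dimensional convex body K with smooth boundary can be written as a union of n+1 subsets, each of diameter strictly smaller than the diameter of K. -/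
open RealInnerProductSpace

/-!
Hadwiger's argument. The outer normal cones at the `n + 1` vertices of an `n`-simplex cover the
space, and none of them contains a pair `u, -u` with `u ≠ 0`. Let `Bᵢ` be the set of boundary points
of `K` whose outer unit normal lies in the `i`-th cone. If `x, y` realise the diameter of `K`, then
`y - x` is an outer normal at `y` and `x - y` one at `x`; by uniqueness of normals these are the
normals of `x` and `y`, so `x` and `y` never lie in the same `Bᵢ`. As `Bᵢ` is compact,
`diam Bᵢ < diam K`. Every point of `K` lies on a segment from an interior point `c` to the
boundary, and `c` is at distance `< diam K` from all of `K`, so the convex hulls of `{c} ∪ Bᵢ`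
cover `K` and have diameter `< diam K`.
-/

open Metric Set Filter Topology

theorem IsPreconnected.inter_frontier_nonempty {X : Type*} [TopologicalSpace X] {s t : Set X}
    (hs : IsPreconnected s) (hst : (s ∩ t).Nonempty) (hst' : (s \ t).Nonempty) :
    (s ∩ frontier t).Nonempty := by
  by_contra! hfr
  have hsplit : s ⊆ interior t ∪ (closure t)ᶜ := fun y hy =>
    or_iff_not_imp_right.2 fun hyc => by_contra fun hyi => hfr.subset ⟨hy, not_not.1 hyc, hyi⟩
  obtain ⟨x, hxs, hxt⟩ := hst
  have hs_int : s ⊆ interior t :=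
    hs.subset_left_of_subset_union isOpen_interior isClosed_closure.isOpen_compl
      (disjoint_compl_right.mono_left (interior_subset.trans subset_closure)) hsplit
      ⟨x, hxs, (hsplit hxs).resolve_right (not_not_intro (subset_closure hxt))⟩
  obtain ⟨y, hys, hyt⟩ := hst'
  exact hyt (interior_subset (hs_int hys))

theorem IsCompact.diam_lt_of_forall_dist_lt {X : Type*} [PseudoMetricSpace X] {s : Set X}
    (hs : IsCompact s) (hne : s.Nonempty) {r : ℝ} (h : ∀ x ∈ s, ∀ y ∈ s, dist x y < r) :
    diam s < r := by
  obtain ⟨p, hp, hmax⟩ :=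
    (hs.prod hs).exists_isMaxOn (hne.prod hne) continuous_dist.continuousOn
  refine lt_of_le_of_lt (diam_le_of_forall_dist_le dist_nonneg fun x hx y hy => ?_)
    (h _ hp.1 _ hp.2)
  exact hmax (mk_mem_prod hx hy)

section NormedSpace

variable {E : Type*} [NormedAddCommGroup E] [NormedSpace ℝ E] {K : Set E}

theorem exists_mem_frontier_mem_segment (hK : Bornology.IsBounded K) {c y : E} (hy : y ∈ K)
    (hyc : y ≠ c) : ∃ z ∈ frontier K, y ∈ segment ℝ c z := by
  -- the ray from `y` pointing away from `c` leaves `K`, so by connectedness it crosses `frontier K`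
  set ray := (fun t : ℝ => y + t • (y - c)) '' Ici 0
  have hleave : (ray \ K).Nonempty := by
    have hpos : 0 < ‖y - c‖ := norm_pos_iff.2 (sub_ne_zero.2 hyc)
    set t := (diam K + 1) / ‖y - c‖
    refine ⟨y + t • (y - c), ⟨t, mem_Ici.2 (by positivity), rfl⟩, fun hK' => ?_⟩
    have := dist_le_diam_of_mem hK hy hK'
    rw [dist_self_add_right, norm_smul, Real.norm_of_nonneg (by positivity),
      div_mul_cancel₀ _ hpos.ne'] at this
    linarith
  obtain ⟨_, ⟨t, ht, rfl⟩, hz⟩ :=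
    (isPreconnected_Ici.image _ (by fun_prop)).inter_frontier_nonempty
      ⟨y, ⟨0, mem_Ici.2 le_rfl, by simp⟩, hy⟩ hleave
  refine ⟨_, hz, mem_segment_iff_sameRay.2 ?_⟩
  simpa using SameRay.sameRay_nonneg_smul_right (R := ℝ) (y - c) (mem_Ici.1 ht)

theorem dist_lt_diam_of_mem_interior [Nontrivial E] (hK : Bornology.IsBounded K) {c x : E}
    (hc : c ∈ interior K) (hx : x ∈ K) : dist x c < diam K := by
  have hKc : K ∈ 𝓝 c := mem_interior_iff_mem_nhds.1 hc
  have of_ne : ∀ x ∈ K, x ≠ c → dist x c < diam K := by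
    intro x hx hxc
    have hpush : ∀ᶠ ε in 𝓝 (0 : ℝ), c + ε • (c - x) ∈ K :=
      Continuous.tendsto' (f := fun ε : ℝ => c + ε • (c - x)) (by fun_prop) 0 c (by simp) hKc
    have hpush' : ∀ᶠ ε in 𝓝[>] (0 : ℝ), c + ε • (c - x) ∈ K ∧ 0 < ε :=
      (hpush.filter_mono nhdsWithin_le_nhds).and self_mem_nhdsWithin
    obtain ⟨ε, hεK, hε⟩ := hpush'.exists
    calc dist x c < (1 + ε) * dist x c := lt_mul_of_one_lt_left (dist_pos.2 hxc) (by linarith)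
      _ = dist x (c + ε • (c - x)) := by
        rw [dist_eq_norm, dist_eq_norm,
          show x - (c + ε • (c - x)) = (1 + ε) • (x - c) by module, norm_smul,
          Real.norm_of_nonneg (by linarith)]
      _ ≤ diam K := dist_le_diam_of_mem hK hx hεK
  rcases eq_or_ne c x with rfl | hxc
  · have hnear : ∀ᶠ y in 𝓝[≠] c, y ∈ K ∧ y ≠ c :=
      (eventually_nhdsWithin_of_eventually_nhds hKc).and self_mem_nhdsWithin
    obtain ⟨y, hyK, hyx⟩ := hnear.exists
    rw [dist_self]
    exact (dist_pos.2 hyx).trans (of_ne y hyK hyx)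
  · exact of_ne x hx hxc.symm

theorem diam_convexHull_insert_lt [Nontrivial E] {B : Set E} (hK : Bornology.IsBounded K)
    (hB : IsCompact B) (hBK : B ⊆ K) {c : E} (hc : c ∈ interior K)
    (hdist : ∀ x ∈ B, ∀ y ∈ B, dist x y < diam K) :
    diam (convexHull ℝ (insert c B)) < diam K := by
  rw [convexHull_diam]
  have hcB : ∀ x ∈ B, dist x c < diam K := fun x hx =>
    dist_lt_diam_of_mem_interior hK hc (hBK hx)
  refine (hB.insert c).diam_lt_of_forall_dist_lt (insert_nonempty _ _) ?_
  rintro x (rfl | hx) y (rfl | hy)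
  · simpa using dist_lt_diam_of_mem_interior hK hc (interior_subset hc)
  · rw [dist_comm]
    exact hcB y hy
  · exact hcB x hx
  · exact hdist x hx y hy

end NormedSpace

theorem affineSpan_range_cons_zero_basis {k V : Type*} [Ring k] [AddCommGroup V] [Module k V]
    {n : ℕ} (b : Module.Basis (Fin n) k V) :
    affineSpan k (range (Fin.cons 0 b : Fin (n + 1) → V)) = ⊤ := by
  rw [AffineSubspace.affineSpan_eq_top_iff_vectorSpan_eq_top_of_nonempty k V V (range_nonempty _),
    vectorSpan_eq_span_vsub_set_right k (mem_range_self 0), eq_top_iff, ← b.span_eq]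
  refine Submodule.span_mono ?_
  rintro _ ⟨j, rfl⟩
  exact ⟨b j, ⟨j.succ, by simp⟩, by simp⟩

section InnerProductSpace

variable {E : Type*} [NormedAddCommGroup E] [InnerProductSpace ℝ E]

def outerUnitNormals (K : Set E) (x : E) : Set E :=
  {u | ‖u‖ = 1 ∧ ∀ y ∈ K, ⟪y, u⟫ ≤ ⟪x, u⟫}

theorem isClosed_outerUnitNormals_graph (K : Set E) :
    IsClosed {p : E × E | p.2 ∈ outerUnitNormals K p.1} := by
  have : {p : E × E | p.2 ∈ outerUnitNormals K p.1} =
      {p | ‖p.2‖ = 1} ∩ ⋂ y ∈ K, {p | ⟪y, p.2⟫ ≤ ⟪p.1, p.2⟫} := by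
    ext; simp [outerUnitNormals]
  rw [this]
  exact (isClosed_eq (by fun_prop) continuous_const).inter <|
    isClosed_biInter fun y _ => isClosed_le (by fun_prop) (by fun_prop)

theorem inv_norm_smul_sub_mem_outerUnitNormals {K : Set E} (hK : Bornology.IsBounded K)
    {x y : E} (hx : x ∈ K) (hxy : dist x y = diam K) (hne : x ≠ y) :
    ‖y - x‖⁻¹ • (y - x) ∈ outerUnitNormals K y := by
  refine ⟨norm_smul_inv_norm (sub_ne_zero.2 hne.symm), fun z hz => ?_⟩
  have hzx : ‖z - x‖ ≤ ‖y - x‖ := by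
    rw [← dist_eq_norm, ← dist_eq_norm, dist_comm y, hxy]
    exact dist_le_diam_of_mem hK hz hx
  have hexpand : ‖z - x‖ ^ 2 = ‖z - y‖ ^ 2 + 2 * ⟪z - y, y - x⟫ + ‖y - x‖ ^ 2 := by
    rw [← norm_add_sq_real, sub_add_sub_cancel]
  have hobtuse : ⟪z - y, y - x⟫ ≤ 0 := by
    nlinarith [sq_nonneg ‖z - y‖, pow_le_pow_left₀ (norm_nonneg _) hzx 2]
  rw [real_inner_smul_right, real_inner_smul_right]
  rw [inner_sub_left] at hobtuse
  exact mul_le_mul_of_nonneg_left (by linarith) (by positivity)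

/-- The normal cone of the polytope `convexHull ℝ (range v)` at its vertex `v i`. -/
def vertexNormalCone {ι : Type*} (v : ι → E) (i : ι) : Set E :=
  {u | ∀ j, ⟪u, v j⟫ ≤ ⟪u, v i⟫}

theorem isClosed_vertexNormalCone {ι : Type*} (v : ι → E) (i : ι) :
    IsClosed (vertexNormalCone v i) := by
  simp only [vertexNormalCone, ofPred_forall]
  exact isClosed_iInter fun j => isClosed_le (by fun_prop) (by fun_prop)

theorem exists_mem_vertexNormalCone {ι : Type*} [Finite ι] [Nonempty ι] (v : ι → E) (u : E) :
    ∃ i, u ∈ vertexNormalCone v i :=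
  Finite.exists_max fun j => ⟪u, v j⟫

theorem eq_zero_of_mem_vertexNormalCone_of_neg_mem {ι : Type*} {v : ι → E}
    (hv : affineSpan ℝ (range v) = ⊤) {i : ι} {u : E} (hu : u ∈ vertexNormalCone v i)
    (hnu : -u ∈ vertexNormalCone v i) : u = 0 := by
  have hperp : vectorSpan ℝ (range v) ≤ LinearMap.ker (innerₛₗ ℝ u) := by
    rw [vectorSpan_eq_span_vsub_set_right ℝ (mem_range_self i), Submodule.span_le]
    rintro _ ⟨_, ⟨j, rfl⟩, rfl⟩
    have := hnu j
    simp only [inner_neg_left, neg_le_neg_iff] at this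
    simp [inner_sub_right, le_antisymm (hu j) this]
  rw [AffineSubspace.vectorSpan_eq_top_of_affineSpan_eq_top ℝ E E hv] at hperp
  simpa using hperp (Submodule.mem_top (x := u))

/-- Schneider's reverse spherical image `τ(K, S)`. -/
def reverseSphericalImage (K S : Set E) : Set E :=
  {x | x ∈ frontier K ∧ ∃ u ∈ S, u ∈ outerUnitNormals K x}

theorem isCompact_reverseSphericalImage [ProperSpace E] {K S : Set E} (hK : IsCompact K)
    (hS : IsClosed S) : IsCompact (reverseSphericalImage K S) := by
  have himage : reverseSphericalImage K S =
      Prod.fst '' ({p : E × E | p.1 ∈ frontier K ∧ p.2 ∈ S} ∩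
        {p | p.2 ∈ outerUnitNormals K p.1}) := by
    ext x
    simp [reverseSphericalImage, and_assoc]
  have hbounded : IsCompact (frontier K ×ˢ sphere (0 : E) 1) :=
    (hK.of_isClosed_subset isClosed_frontier hK.isClosed.frontier_subset).prod
      (isCompact_sphere 0 1)
  rw [himage]
  refine (hbounded.of_isClosed_subset ?_ ?_).image continuous_fst
  · exact ((isClosed_frontier.preimage continuous_fst).inter (hS.preimage continuous_snd)).inter
      (isClosed_outerUnitNormals_graph K)
  · rintro p ⟨⟨hp, -⟩, hu, -⟩
    exact ⟨hp, by simpa using hu⟩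

theorem dist_lt_diam_of_mem_reverseSphericalImage {K S : Set E} (hK : IsCompact K)
    (hd : 0 < diam K) (hsmooth : ∀ x ∈ frontier K, ∃! u, u ∈ outerUnitNormals K x)
    (hS : ∀ u ∈ S, -u ∈ S → u = 0) {x y : E} (hx : x ∈ reverseSphericalImage K S)
    (hy : y ∈ reverseSphericalImage K S) : dist x y < diam K := by
  have hxK := hK.isClosed.frontier_subset hx.1
  have hyK := hK.isClosed.frontier_subset hy.1
  refine (dist_le_diam_of_mem hK.isBounded hxK hyK).lt_of_ne fun hxy => ?_
  have hne : x ≠ y := by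
    rintro rfl
    rw [dist_self] at hxy
    exact hd.ne hxy
  obtain ⟨u, huS, hu⟩ := hy.2
  obtain ⟨w, hwS, hw⟩ := hx.2
  have hu_eq : u = ‖y - x‖⁻¹ • (y - x) := (hsmooth y hy.1).unique hu
    (inv_norm_smul_sub_mem_outerUnitNormals hK.isBounded hxK hxy hne)
  have hw_eq : w = -u := (hsmooth x hx.1).unique hw <| by
    rw [hu_eq, ← smul_neg, neg_sub, norm_sub_rev]
    exact inv_norm_smul_sub_mem_outerUnitNormals hK.isBounded hyK (by rwa [dist_comm]) hne.symm
  have hu0 : u = 0 := hS u huS (hw_eq ▸ hwS)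
  simpa [hu0] using hu.1

end InnerProductSpace

/-- Hadwiger: every n-dimensional convex body with smooth boundary (a unique outer
unit normal at every boundary point) can be written as a union of n+1 subsets,
each of diameter strictly smaller than the diameter of the body. -/
theorem smooth_convex_body_borsuk (n : ℕ) (hn : 0 < n)
    (K : Set (EuclideanSpace ℝ (Fin n)))
    (hKc : IsCompact K) (hKconv : Convex ℝ K) (hKint : (interior K).Nonempty)
    (hsmooth : ∀ x ∈ frontier K,
      ∃! u : EuclideanSpace ℝ (Fin n), ‖u‖ = 1 ∧ ∀ y ∈ K, ⟪y, u⟫ ≤ ⟪x, u⟫) :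
    ∃ X : Fin (n + 1) → Set (EuclideanSpace ℝ (Fin n)),
      K = ⋃ i, X i ∧ ∀ i, Metric.diam (X i) < Metric.diam K := by
  obtain ⟨c, hc⟩ := hKint
  have : Nonempty (Fin n) := ⟨⟨0, hn⟩⟩
  have hd : 0 < diam K := by
    simpa using dist_lt_diam_of_mem_interior hKc.isBounded hc (interior_subset hc)
  set v : Fin (n + 1) → EuclideanSpace ℝ (Fin n) :=
    Fin.cons 0 (EuclideanSpace.basisFun (Fin n) ℝ).toBasis
  have hfrK : frontier K ⊆ K := hKc.isClosed.frontier_subset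
  refine ⟨fun i => convexHull ℝ (insert c (reverseSphericalImage K (vertexNormalCone v i))),
    subset_antisymm (fun y hy => ?_) (iUnion_subset fun i => ?_), fun i => ?_⟩
  · rcases eq_or_ne y c with rfl | hyc
    · exact mem_iUnion.2 ⟨0, subset_convexHull ℝ _ (mem_insert _ _)⟩
    obtain ⟨z, hz, hyz⟩ := exists_mem_frontier_mem_segment hKc.isBounded hy hyc
    obtain ⟨u, hu, -⟩ := hsmooth z hz
    obtain ⟨i, hi⟩ := exists_mem_vertexNormalCone v u
    have hzB : z ∈ reverseSphericalImage K (vertexNormalCone v i) := ⟨hz, u, hi, hu⟩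
    exact mem_iUnion.2
      ⟨i, segment_subset_convexHull (mem_insert _ _) (mem_insert_of_mem _ hzB) hyz⟩
  · exact convexHull_min (insert_subset (interior_subset hc) fun x hx => hfrK hx.1) hKconv
  · refine diam_convexHull_insert_lt hKc.isBounded
      (isCompact_reverseSphericalImage hKc (isClosed_vertexNormalCone v i)) (fun x hx => hfrK hx.1)
      hc fun x hx y hy => ?_
    exact dist_lt_diam_of_mem_reverseSphericalImage hKc hd hsmooth
      (fun u => eq_zero_of_mem_vertexNormalCone_of_neg_mem (affineSpan_range_cons_zero_basis _))
      hx hy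
end

section
/- Let p be a prime and let 𝓕 be a family of (2p−1)-element subsets of {1,2,…,n} such that no two distinct members F, F' of 𝓕 satisfy |F ∩ F'| = p−1. Then the number of members of 𝓕 is at most the binomial coefficient C(n, p−1). -/
/-!
Let `M` be the inclusion matrix of `𝓕` against the `(p - 1)`-subsets of `{1, …, n}`, i.e.
`M F T = [T ⊆ F]`. Then `(M Mᵀ) F F' = C(|F ∩ F'|, p - 1)`, and by Lucas's theorem this is `1`
modulo `p` when `|F ∩ F'| ≡ p - 1 (mod p)` and `0` otherwise. For members of `𝓕` the intersection
sizes lie in `[0, 2p - 1]`, so the congruence holds exactly when `F = F'`: over `𝔽_p` the matrix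
`M Mᵀ` is the identity, and `|𝓕| = rank (M Mᵀ) ≤ rank M ≤ C(n, p - 1)`.
-/

open Finset Matrix

theorem ZMod.natCast_choose_pred_eq_ite (p k : ℕ) [Fact p.Prime] :
    ((k.choose (p - 1) : ℕ) : ZMod p) = if k % p = p - 1 then 1 else 0 := by
  have hp := (Fact.out : p.Prime).pos
  have hlt : p - 1 < p := Nat.sub_lt hp one_pos
  rw [(ZMod.natCast_eq_natCast_iff ..).mpr Choose.choose_modEq_choose_mod_mul_choose_div_nat,
    Nat.mod_eq_of_lt hlt, Nat.div_eq_of_lt hlt, Nat.choose_zero_right, mul_one]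
  split_ifs with h
  · simp [h]
  · rw [Nat.choose_eq_zero_of_lt (by have := Nat.mod_lt k hp; omega), Nat.cast_zero]

theorem Nat.mod_ne_pred_of_lt_two_mul_sub_one {p k : ℕ} (hk : k < 2 * p - 1) (hne : k ≠ p - 1) :
    k % p ≠ p - 1 := by
  intro h
  have hdiv := Nat.div_add_mod k p
  have hq : k / p < 2 := Nat.div_lt_of_lt_mul (by omega)
  generalize k / p = q at hdiv hq
  interval_cases q <;> omega

theorem Finset.card_inter_lt_of_ne {α : Type*} [DecidableEq α] {s t : Finset α} {m : ℕ}
    (hs : s.card = m) (ht : t.card = m) (hne : s ≠ t) : (s ∩ t).card < m := by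
  by_contra! h
  exact hne ((eq_of_subset_of_card_le inter_subset_left (by omega)).symm.trans
    (eq_of_subset_of_card_le inter_subset_right (by omega)))

section InclusionMatrix

variable {α : Type*} [Fintype α] [DecidableEq α]

def inclusionMatrix (R : Type*) [Zero R] [One R] (𝓕 : Finset (Finset α)) (k : ℕ) :
    Matrix 𝓕 (powersetCard k (univ : Finset α)) R :=
  Matrix.of fun F T => if (T : Finset α) ⊆ F then 1 else 0

theorem inclusionMatrix_mul_transpose_apply (R : Type*) [NonAssocSemiring R]
    (𝓕 : Finset (Finset α)) (k : ℕ) (F F' : 𝓕) :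
    (inclusionMatrix R 𝓕 k * (inclusionMatrix R 𝓕 k)ᵀ) F F' =
      ((F.1 ∩ F'.1).card.choose k : ℕ) := by
  simp only [Matrix.mul_apply, Matrix.transpose_apply, inclusionMatrix, Matrix.of_apply,
    mul_ite, mul_one, mul_zero, ← ite_and, ← subset_inter_iff]
  rw [sum_coe_sort (powersetCard k univ) fun T => if T ⊆ F'.1 ∩ F.1 then (1 : R) else 0,
    sum_boole, inter_comm, ← card_powersetCard]
  congr 2
  ext T
  simp only [mem_filter, mem_powersetCard, subset_univ, true_and]
  tauto

theorem card_le_choose_of_choose_card_inter_eq_zero {K : Type*} [Field K]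
    (𝓕 : Finset (Finset α)) (k : ℕ) (hself : ∀ F ∈ 𝓕, (F.card.choose k : K) ≠ 0)
    (hinter : ∀ F ∈ 𝓕, ∀ F' ∈ 𝓕, F ≠ F' → ((F ∩ F').card.choose k : K) = 0) :
    𝓕.card ≤ (Fintype.card α).choose k := by
  classical
  set M := inclusionMatrix K 𝓕 k
  have hdiag : M * Mᵀ = diagonal fun F : 𝓕 => (F.1.card.choose k : K) := by
    ext F F'
    rw [inclusionMatrix_mul_transpose_apply, diagonal_apply]
    split_ifs with h
    · rw [h, inter_self]
    · exact hinter F F.2 F' F'.2 fun h' => h (Subtype.ext h')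
  calc 𝓕.card = (M * Mᵀ).rank := by
        rw [hdiag, rank_diagonal, Fintype.card_congr
          (Equiv.subtypeUnivEquiv fun F : 𝓕 => hself F F.2), Fintype.card_coe]
    _ ≤ M.rank := rank_mul_le_left _ _
    _ ≤ (powersetCard k (univ : Finset α)).card :=
        (rank_le_card_width M).trans_eq (Fintype.card_coe _)
    _ = (Fintype.card α).choose k := by rw [card_powersetCard, card_univ]

end InclusionMatrix

/-- Frankl–Wilson: if p is prime and 𝓕 is a family of (2p−1)-element subsets of an
n-element set such that no two distinct members intersect in exactly p−1 elements,
then |𝓕| ≤ C(n, p−1). -/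
theorem frankl_wilson (p n : ℕ) (hp : p.Prime)
    (𝓕 : Finset (Finset (Fin n)))
    (hcard : ∀ F ∈ 𝓕, F.card = 2 * p - 1)
    (hinter : ∀ F ∈ 𝓕, ∀ F' ∈ 𝓕, F ≠ F' → (F ∩ F').card ≠ p - 1) :
    𝓕.card ≤ n.choose (p - 1) := by
  have := Fact.mk hp
  have hmod : (2 * p - 1) % p = p - 1 := by
    rw [show 2 * p - 1 = (p - 1) + p * 1 by have := hp.two_le; omega,
      Nat.add_mul_mod_self_left, Nat.mod_eq_of_lt (by have := hp.pos; omega)]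
  simpa using card_le_choose_of_choose_card_inter_eq_zero (K := ZMod p) 𝓕 (p - 1)
    (fun F hF => by simp [ZMod.natCast_choose_pred_eq_ite, hcard F hF, hmod])
    (fun F hF F' hF' hne => by
      rw [ZMod.natCast_choose_pred_eq_ite, if_neg (Nat.mod_ne_pred_of_lt_two_mul_sub_one
        (card_inter_lt_of_ne (hcard F hF) (hcard F' hF') hne) (hinter F hF F' hF' hne))])
end

section
/- Let p be a prime and let 𝓕 be a family of 2p-element subsets of {1,2,…,4p} such that no two members of 𝓕 overlap in exactly p elements. Then the number of members of 𝓕 is at most (1/2)·C(4p, p). -/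
/-!
Fix a point `z`. Replacing each member not containing `z` by its complement keeps the family
admissible, since `#(Fᶜ ∩ F') = 2p - #(F ∩ F')`, and is at most two-to-one. Deleting `z` then
yields `(2p-1)`-subsets of a `(4p-1)`-set with sizes `≡ -1 (mod p)` and pairwise intersections of
size `#(G ∩ G') - 1` where `0 < #(G ∩ G') < 2p` and `#(G ∩ G') ≠ p`, hence `≢ -1 (mod p)`.
By the modular Frankl–Wilson bound there are at most `C(4p-1, p-1) = C(4p, p) / 4` such sets.

That bound is linear algebra over `𝔽_p`: the functions `T ↦ ∏_{l ≠ -1} (#(G ∩ T) - l)`, together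
with Babai–Frankl's swallowing functions `T ↦ [I ⊆ T] (#T + 1)` for `#I < p - 1`, have a
triangular evaluation matrix, so they are linearly independent, and they all lie in the span of
the monomials `[I ⊆ T]` with `#I ≤ p - 1`.
-/

open Finset

section SetFunctions

variable {α : Type*} [DecidableEq α] (K : Type*) [CommRing K]

/-- Functions on `Finset α` model polynomials in variables `x i` (`i : α`) evaluated at
0/1-vectors; `setMonomial K I` is the monomial `∏ i ∈ I, x i`. -/
def setMonomial (I : Finset α) : Finset α → K :=
  fun T => if I ⊆ T then 1 else 0

def lowDegree (Ω : Finset α) (d : ℕ) : Submodule K (Finset α → K) :=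
  Submodule.span K (setMonomial K '' {I | I ⊆ Ω ∧ I.card ≤ d})

variable {K}

theorem setMonomial_mul (I J : Finset α) :
    setMonomial K I * setMonomial K J = setMonomial K (I ∪ J) := by
  funext T
  by_cases hI : I ⊆ T <;> by_cases hJ : J ⊆ T <;> simp [setMonomial, union_subset_iff, hI, hJ]

theorem setMonomial_empty : setMonomial K (∅ : Finset α) = 1 := by
  funext T; simp [setMonomial]

theorem lowDegree_mono (Ω : Finset α) {d e : ℕ} (h : d ≤ e) :
    lowDegree K Ω d ≤ lowDegree K Ω e :=
  Submodule.span_mono (Set.image_mono fun _ hI => ⟨hI.1, hI.2.trans h⟩)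

theorem setMonomial_mem_lowDegree {Ω I : Finset α} {d : ℕ} (hI : I ⊆ Ω) (hd : I.card ≤ d) :
    setMonomial K I ∈ lowDegree K Ω d :=
  Submodule.subset_span ⟨I, ⟨hI, hd⟩, rfl⟩

theorem one_mem_lowDegree (Ω : Finset α) (d : ℕ) : (1 : Finset α → K) ∈ lowDegree K Ω d :=
  setMonomial_empty (α := α) (K := K) ▸
    setMonomial_mem_lowDegree (empty_subset Ω) (Nat.zero_le d)

theorem mul_mem_lowDegree {Ω : Finset α} {d e : ℕ} {f g : Finset α → K}
    (hf : f ∈ lowDegree K Ω d) (hg : g ∈ lowDegree K Ω e) : f * g ∈ lowDegree K Ω (d + e) := by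
  have h := Submodule.mul_mem_mul hf hg
  rw [lowDegree, lowDegree, Submodule.span_mul_span] at h
  refine Submodule.span_le.mpr ?_ h
  rintro _ ⟨_, ⟨I, hI, rfl⟩, _, ⟨J, hJ, rfl⟩, rfl⟩
  show setMonomial K I * setMonomial K J ∈ _
  rw [setMonomial_mul]
  exact setMonomial_mem_lowDegree (union_subset hI.1 hJ.1)
    ((card_union_le I J).trans (Nat.add_le_add hI.2 hJ.2))

theorem prod_mem_lowDegree {Ω : Finset α} {ι : Type*} (s : Finset ι) {f : ι → Finset α → K}
    (hf : ∀ i ∈ s, f i ∈ lowDegree K Ω 1) : ∏ i ∈ s, f i ∈ lowDegree K Ω s.card := by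
  induction s using Finset.cons_induction with
  | empty => exact one_mem_lowDegree Ω 0
  | cons a s ha ih =>
    rw [prod_cons, card_cons, Nat.add_comm]
    exact mul_mem_lowDegree (hf a (mem_cons_self a s)) (ih fun i hi => hf i (mem_cons_of_mem hi))

theorem card_inter_add_const_mem_lowDegree {Ω A : Finset α} (hA : A ⊆ Ω) (c : K) :
    (fun T => ((A ∩ T).card : K) + c) ∈ lowDegree K Ω 1 := by
  have hsum : (fun T => ((A ∩ T).card : K) + c) = ∑ i ∈ A, setMonomial K {i} + c • 1 := by
    funext T
    simp [setMonomial, Finset.sum_apply]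
  rw [hsum]
  exact Submodule.add_mem _ (Submodule.sum_mem _ fun i hi =>
      setMonomial_mem_lowDegree (singleton_subset_iff.mpr (hA hi)) (card_singleton i).le)
    (Submodule.smul_mem _ c (one_mem_lowDegree Ω 1))

theorem card_le_of_linearIndependent_of_mem_lowDegree [Nontrivial K] {ι : Type*} [Fintype ι]
    {Ω : Finset α} {d : ℕ} {v : ι → Finset α → K} (hv : LinearIndependent K v)
    (hmem : ∀ i, v i ∈ lowDegree K Ω d) :
    Fintype.card ι ≤ #{I ∈ Ω.powerset | I.card ≤ d} := by
  classical
  set w := {I ∈ Ω.powerset | I.card ≤ d}.image (setMonomial K)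
  have hw : (w : Set (Finset α → K)) = setMonomial K '' {I | I ⊆ Ω ∧ I.card ≤ d} := by
    ext; simp [w]
  have hspan : Set.range v ≤ Submodule.span K (w : Set (Finset α → K)) := by
    rintro _ ⟨i, rfl⟩
    rw [hw]
    exact hmem i
  calc Fintype.card ι ≤ Fintype.card (w : Set (Finset α → K)) :=
        linearIndependent_le_span_aux' v hv _ hspan
    _ = w.card := Fintype.card_coe w
    _ ≤ _ := card_image_le

end SetFunctions

theorem linearIndependent_of_eval_triangular {ι X R : Type*} [Fintype ι] [CommRing R]
    [NoZeroDivisors R] (v : ι → X → R) (x : ι → X) (rank : ι → ℕ)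
    (hdiag : ∀ i, v i (x i) ≠ 0) (hlower : ∀ i j, j ≠ i → v j (x i) ≠ 0 → rank j < rank i) :
    LinearIndependent R v := by
  rw [Fintype.linearIndependent_iff]
  intro c hc i
  induction hi : rank i using Nat.strong_induction_on generalizing i with
  | _ n ih =>
    have heval : ∑ j, c j * v j (x i) = 0 := by
      simpa [Finset.sum_apply] using congrFun hc (x i)
    rw [Fintype.sum_eq_single i fun j hji => ?_] at heval
    · exact (mul_eq_zero.mp heval).resolve_right (hdiag i)
    by_cases hj : v j (x i) = 0
    · rw [hj, mul_zero]
    · rw [ih (rank j) (hi ▸ hlower i j hji hj) j rfl, zero_mul]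

theorem card_powerset_filter_card_le {α : Type*} [DecidableEq α] (Ω : Finset α) (s : ℕ) :
    #{I ∈ Ω.powerset | I.card ≤ s} = #{I ∈ Ω.powerset | I.card < s} + Ω.card.choose s := by
  rw [← card_powersetCard, ← card_union_of_disjoint]
  · congr 1
    ext I
    simp only [mem_filter, mem_powerset, mem_union, mem_powersetCard, Nat.le_iff_lt_or_eq,
      and_or_left]
  · rw [disjoint_left]
    intro I hI hI'
    rw [mem_filter] at hI
    rw [mem_powersetCard] at hI'
    omega

section ModularFranklWilson

variable {α K : Type*} [DecidableEq α] [Field K]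

def intersectionPolynomial (L : Finset K) (G : Finset α) : Finset α → K :=
  fun T => ∏ l ∈ L, (((G ∩ T).card : K) - l)

def swallowingPolynomial (Ω : Finset α) (k : K) (I : Finset α) : Finset α → K :=
  fun T => setMonomial K I T * (((Ω ∩ T).card : K) - k)

theorem intersectionPolynomial_eq_zero_iff {L : Finset K} {G T : Finset α} :
    intersectionPolynomial L G T = 0 ↔ ((G ∩ T).card : K) ∈ L := by
  simp [intersectionPolynomial, prod_eq_zero_iff, sub_eq_zero]

theorem intersectionPolynomial_mem_lowDegree {Ω G : Finset α} (hG : G ⊆ Ω) (L : Finset K) :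
    intersectionPolynomial L G ∈ lowDegree K Ω L.card := by
  have h : intersectionPolynomial L G = ∏ l ∈ L, fun T => ((G ∩ T).card : K) + -l := by
    funext T
    simp [intersectionPolynomial, Finset.prod_apply, sub_eq_add_neg]
  exact h ▸ prod_mem_lowDegree L fun l _ => card_inter_add_const_mem_lowDegree hG (-l)

theorem swallowingPolynomial_mem_lowDegree {Ω I : Finset α} (hI : I ⊆ Ω) (k : K) :
    swallowingPolynomial Ω k I ∈ lowDegree K Ω (I.card + 1) := by
  have h : swallowingPolynomial Ω k I =
      setMonomial K I * fun T => ((Ω ∩ T).card : K) + -k := by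
    funext T
    simp [swallowingPolynomial, sub_eq_add_neg]
  exact h ▸ mul_mem_lowDegree (setMonomial_mem_lowDegree hI le_rfl)
    (card_inter_add_const_mem_lowDegree subset_rfl (-k))

theorem swallowingPolynomial_apply_of_card_eq {Ω T : Finset α} (hT : T ⊆ Ω) {k : K}
    (hk : (T.card : K) = k) (I : Finset α) : swallowingPolynomial Ω k I T = 0 := by
  simp [swallowingPolynomial, inter_eq_right.mpr hT, hk]

theorem swallowingPolynomial_apply_of_not_subset (Ω : Finset α) (k : K) {I T : Finset α}
    (hIT : ¬ I ⊆ T) : swallowingPolynomial Ω k I T = 0 := by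
  simp [swallowingPolynomial, setMonomial, hIT]

theorem swallowingPolynomial_apply_self {Ω I : Finset α} (hI : I ⊆ Ω) (k : K) :
    swallowingPolynomial Ω k I I = (I.card : K) - k := by
  simp [swallowingPolynomial, setMonomial, inter_eq_right.mpr hI]

theorem card_le_choose_of_modular_intersections (Ω : Finset α) (𝓗 : Finset (Finset α))
    (L : Finset K) (k : K) (hsub : ∀ G ∈ 𝓗, G ⊆ Ω) (hcard : ∀ G ∈ 𝓗, (G.card : K) = k)
    (hinter : ∀ G ∈ 𝓗, ∀ G' ∈ 𝓗, G ≠ G' → ((G ∩ G').card : K) ∈ L) (hk : k ∉ L)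
    (hsmall : ∀ j < L.card, (j : K) ≠ k) :
    𝓗.card ≤ Ω.card.choose L.card := by
  set 𝓘 := {I ∈ Ω.powerset | I.card < L.card}
  have mem_𝓘 : ∀ I ∈ 𝓘, I ⊆ Ω ∧ I.card < L.card := fun I hI => by
    simpa [𝓘] using hI
  let v : 𝓗 ⊕ 𝓘 → Finset α → K :=
    Sum.elim (fun G => intersectionPolynomial L G.1) (fun I => swallowingPolynomial Ω k I.1)
  let x : 𝓗 ⊕ 𝓘 → Finset α := Sum.elim (fun G => G.1) (fun I => I.1)
  let rank : 𝓗 ⊕ 𝓘 → ℕ := Sum.elim (fun _ => 0) (fun I => I.1.card + 1)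
  have hdiag : ∀ i, v i (x i) ≠ 0 := by
    rintro (⟨G, hG⟩ | ⟨I, hI⟩)
    · simpa [v, x, intersectionPolynomial_eq_zero_iff, hcard G hG] using hk
    · simpa [v, x, swallowingPolynomial_apply_self (mem_𝓘 I hI).1, sub_eq_zero]
        using hsmall _ (mem_𝓘 I hI).2
  have hlower : ∀ i j, j ≠ i → v j (x i) ≠ 0 → rank j < rank i := by
    rintro (⟨G₀, hG₀⟩ | ⟨I₀, hI₀⟩) (⟨G, hG⟩ | ⟨I, hI⟩) hne hval
    · refine absurd (intersectionPolynomial_eq_zero_iff.mpr ?_) hval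
      exact hinter G hG G₀ hG₀ fun h => hne (by simp [h])
    · exact absurd (swallowingPolynomial_apply_of_card_eq (hsub G₀ hG₀) (hcard G₀ hG₀) I) hval
    · simp [rank]
    · have hsub : I ⊆ I₀ := by
        by_contra h
        exact hval (swallowingPolynomial_apply_of_not_subset Ω k h)
      have hssub : I ⊂ I₀ := ssubset_of_subset_of_ne hsub fun h => hne (by simp [h])
      simpa [rank] using card_lt_card hssub
  have hmem : ∀ i, v i ∈ lowDegree K Ω L.card := by
    rintro (⟨G, hG⟩ | ⟨I, hI⟩)
    · exact intersectionPolynomial_mem_lowDegree (hsub G hG) L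
    · exact lowDegree_mono Ω (mem_𝓘 I hI).2 (swallowingPolynomial_mem_lowDegree (mem_𝓘 I hI).1 k)
  have hcount := card_le_of_linearIndependent_of_mem_lowDegree
    (linearIndependent_of_eval_triangular v x rank hdiag hlower) hmem
  rw [Fintype.card_sum, Fintype.card_coe, Fintype.card_coe,
    card_powerset_filter_card_le, add_comm _ (Nat.choose _ _)] at hcount
  exact Nat.le_of_add_le_add_right hcount

end ModularFranklWilson

section Orientation

variable {α : Type*} [Fintype α] [DecidableEq α]

def toContaining (z : α) (F : Finset α) : Finset α :=
  if z ∈ F then F else Fᶜ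

theorem mem_toContaining (z : α) (F : Finset α) : z ∈ toContaining z F := by
  unfold toContaining
  split_ifs with h
  · exact h
  · exact mem_compl.mpr h

theorem card_toContaining {m : ℕ} (hα : Fintype.card α = 2 * m) (z : α) {F : Finset α}
    (hF : F.card = m) : (toContaining z F).card = m := by
  unfold toContaining
  split_ifs
  · exact hF
  · rw [card_compl]; omega

theorem card_le_two_mul_card_image_toContaining (z : α) (𝓕 : Finset (Finset α)) :
    𝓕.card ≤ 2 * (𝓕.image (toContaining z)).card := by
  set 𝓖 := 𝓕.image (toContaining z)
  have hcover : 𝓕 ⊆ 𝓖 ∪ 𝓖.image compl := by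
    intro F hF
    by_cases hz : z ∈ F
    · exact mem_union_left _ (mem_image.mpr ⟨F, hF, if_pos hz⟩)
    · exact mem_union_right _
        (mem_image.mpr ⟨Fᶜ, mem_image.mpr ⟨F, hF, if_neg hz⟩, compl_compl F⟩)
  calc 𝓕.card ≤ (𝓖 ∪ 𝓖.image compl).card := card_le_card hcover
    _ ≤ 𝓖.card + (𝓖.image compl).card := card_union_le _ _
    _ ≤ 2 * 𝓖.card := by have := card_image_le (s := 𝓖) (f := compl); omega

theorem card_compl_inter_eq_iff {m : ℕ} (s : Finset α) {t : Finset α} (ht : t.card = 2 * m) :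
    (sᶜ ∩ t).card = m ↔ (s ∩ t).card = m := by
  have hsplit := card_inter_add_card_sdiff t s
  rw [inter_comm sᶜ t, ← sdiff_eq_inter_compl, inter_comm s t]
  omega

theorem card_toContaining_inter_eq_iff {m : ℕ} (hα : Fintype.card α = 4 * m) (z : α)
    {F F' : Finset α} (hF : F.card = 2 * m) (hF' : F'.card = 2 * m) :
    (toContaining z F ∩ toContaining z F').card = m ↔ (F ∩ F').card = m := by
  have hFc : Fᶜ.card = 2 * m := by rw [card_compl]; omega
  have hF'c : F'ᶜ.card = 2 * m := by rw [card_compl]; omega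
  unfold toContaining
  split_ifs
  · rfl
  · rw [inter_comm, card_compl_inter_eq_iff F' hF, inter_comm]
  · exact card_compl_inter_eq_iff F hF'
  · rw [card_compl_inter_eq_iff F hF'c, inter_comm, card_compl_inter_eq_iff F' hF, inter_comm]

end Orientation

theorem ZMod.natCast_sub_one_eq_neg_one_iff {p x : ℕ} (hx : 0 < x) :
    ((x - 1 : ℕ) : ZMod p) = -1 ↔ p ∣ x := by
  rw [Nat.cast_pred hx, sub_eq_neg_self, ZMod.natCast_eq_zero_iff]

theorem Nat.four_mul_choose_pred {p : ℕ} (hp : 0 < p) :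
    4 * (4 * p - 1).choose (p - 1) = (4 * p).choose p := by
  have h := Nat.add_one_mul_choose_eq (4 * p - 1) (p - 1)
  rw [Nat.sub_add_cancel (by omega), Nat.sub_add_cancel hp] at h
  refine Nat.eq_of_mul_eq_mul_right hp ?_
  rw [← h]
  ring

theorem not_dvd_card_inter_of_mem {α : Type*} [DecidableEq α] {p : ℕ} {z : α}
    {G G' : Finset α} (hne : G ≠ G') (hG : G.card = 2 * p) (hG' : G'.card = 2 * p) (hz : z ∈ G ∩ G')
    (hinter : (G ∩ G').card ≠ p) : ¬ p ∣ (G ∩ G').card := by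
  have hlt : (G ∩ G').card < 2 * p := by
    refine lt_of_le_of_ne (hG ▸ card_le_card inter_subset_left) fun h => hne ?_
    have hGG : G ∩ G' = G := eq_of_subset_of_card_le inter_subset_left (by omega)
    have hG'G : G ∩ G' = G' := eq_of_subset_of_card_le inter_subset_right (by omega)
    exact hGG.symm.trans hG'G
  exact fun hdvd => hinter (Nat.eq_of_dvd_of_lt_two_mul (card_pos.mpr ⟨z, hz⟩).ne' hdvd hlt)

theorem card_le_choose_of_mem_of_card_inter_ne {α : Type*} [Fintype α] [DecidableEq α]
    {p : ℕ} [Fact p.Prime] (z : α)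
    (𝓖 : Finset (Finset α)) (hz : ∀ G ∈ 𝓖, z ∈ G) (hcard : ∀ G ∈ 𝓖, G.card = 2 * p)
    (hinter : ∀ G ∈ 𝓖, ∀ G' ∈ 𝓖, G ≠ G' → (G ∩ G').card ≠ p) :
    𝓖.card ≤ (Fintype.card α - 1).choose (p - 1) := by
  have hp : 0 < p := (Fact.out : p.Prime).pos
  have h𝓗 : (𝓖.image (·.erase z)).card = 𝓖.card :=
    card_image_of_injOn fun G hG G' hG' => erase_injOn' z (hz G hG) (hz G' hG')
  have hL : (univ.erase (-1 : ZMod p)).card = p - 1 := by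
    rw [card_erase_of_mem (mem_univ _), card_univ, ZMod.card]
  rw [← h𝓗, ← card_univ, ← card_erase_of_mem (mem_univ z), ← hL]
  refine card_le_choose_of_modular_intersections _ _ _ (-1) ?_ ?_ ?_ (by simp) ?_
  · simp only [mem_image]
    rintro _ ⟨G, -, rfl⟩
    exact erase_subset_erase z (subset_univ G)
  · simp only [mem_image]
    rintro _ ⟨G, hG, rfl⟩
    rw [card_erase_of_mem (hz G hG), hcard G hG,
      ZMod.natCast_sub_one_eq_neg_one_iff (by omega)]
    exact dvd_mul_left p 2
  · simp only [mem_image]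
    rintro _ ⟨G, hG, rfl⟩ _ ⟨G', hG', rfl⟩ hne
    have hG𝓖 : G ≠ G' := fun h => hne (h ▸ rfl)
    have hzG : z ∈ G ∩ G' := mem_inter.mpr ⟨hz G hG, hz G' hG'⟩
    rw [erase_inter, inter_erase, erase_idem, card_erase_of_mem hzG, mem_erase, Ne,
      ZMod.natCast_sub_one_eq_neg_one_iff (card_pos.mpr ⟨z, hzG⟩)]
    exact ⟨not_dvd_card_inter_of_mem hG𝓖 (hcard G hG) (hcard G' hG') hzG
      (hinter G hG G' hG' hG𝓖), mem_univ _⟩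
  · intro j hj
    rw [hL] at hj
    rw [← Nat.add_sub_cancel j 1, Ne, ZMod.natCast_sub_one_eq_neg_one_iff j.succ_pos]
    exact Nat.not_dvd_of_pos_of_lt j.succ_pos (by omega)

/-- Frankl–Wilson: if p is prime and 𝓕 is a family of 2p-element subsets of a
4p-element set such that no two distinct members intersect in exactly p elements,
then |𝓕| ≤ (1/2)·C(4p, p). -/
theorem frankl_wilson_half_choose (p : ℕ) (hp : p.Prime)
    (𝓕 : Finset (Finset (Fin (4 * p))))
    (hcard : ∀ F ∈ 𝓕, F.card = 2 * p)
    (hinter : ∀ F ∈ 𝓕, ∀ F' ∈ 𝓕, F ≠ F' → (F ∩ F').card ≠ p) :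
    (𝓕.card : ℝ) ≤ (1 / 2) * ((4 * p).choose p) := by
  have := Fact.mk hp
  have hα : Fintype.card (Fin (4 * p)) = 4 * p := Fintype.card_fin _
  let z : Fin (4 * p) := ⟨0, by linarith [hp.pos]⟩
  have h𝓖 : (𝓕.image (toContaining z)).card ≤ (4 * p - 1).choose (p - 1) := by
    refine (card_le_choose_of_mem_of_card_inter_ne (p := p) z _ ?_ ?_ ?_).trans_eq (by rw [hα])
    all_goals simp only [mem_image]
    · rintro _ ⟨F, -, rfl⟩
      exact mem_toContaining z F
    · rintro _ ⟨F, hF, rfl⟩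
      exact card_toContaining (by rw [hα]; ring) z (hcard F hF)
    · rintro _ ⟨F, hF, rfl⟩ _ ⟨F', hF', rfl⟩ hne
      rw [Ne, card_toContaining_inter_eq_iff hα z (hcard F hF) (hcard F' hF')]
      exact hinter F hF F' hF' fun h => hne (h ▸ rfl)
  have h𝓕 : 𝓕.card ≤ 2 * (4 * p - 1).choose (p - 1) :=
    (card_le_two_mul_card_image_toContaining z 𝓕).trans (by omega)
  rw [← Nat.four_mul_choose_pred hp.pos]
  have : (𝓕.card : ℝ) ≤ 2 * ((4 * p - 1).choose (p - 1) : ℕ) := by exact_mod_cast h𝓕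
  push_cast
  linarith
end

section
/- Let 𝓐 be a family of h-element subsets of {1,2,…,n} such that every two members of 𝓐 overlap in at least k elements, and suppose some two distinct members of 𝓐 overlap in exactly k elements, where k < h. Then b(T_n(𝓐)) = ℓ(𝓐,k), where T_n(𝓐) = {T_n(A) : A ∈ 𝓐} ⊆ ℝ^n. -/
/-- The indicator vector of a subset A of {1,…,n}, as a point of Euclidean space. -/
noncomputable def indicatorVec {n : ℕ} (A : Finset (Fin n)) :
    EuclideanSpace ℝ (Fin n) :=
  WithLp.toLp 2 (fun i => if i ∈ A then 1 else 0)

/-- The Borsuk number b(X): the smallest m such that X is a union of m subsets,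
each of diameter strictly smaller than the diameter of X. -/
noncomputable def borsukNumber {n : ℕ} (X : Set (EuclideanSpace ℝ (Fin n))) : ℕ :=
  sInf {m : ℕ | ∃ Y : Fin m → Set (EuclideanSpace ℝ (Fin n)),
    X = ⋃ i, Y i ∧ ∀ i, Metric.diam (Y i) < Metric.diam X}

/-- ℓ(𝓐,k): the smallest m such that 𝓐 is a union of m subfamilies in each of which
every two members intersect in at least k+1 elements. -/
noncomputable def larmanNumber {n : ℕ} (k : ℕ) (𝓐 : Finset (Finset (Fin n))) : ℕ :=
  sInf {m : ℕ | ∃ ℬ : Fin m → Finset (Finset (Fin n)),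
    𝓐 = Finset.univ.biUnion ℬ ∧
    ∀ i : Fin m, ∀ A ∈ ℬ i, ∀ A' ∈ ℬ i, k + 1 ≤ (A ∩ A').card}

lemma dist_indicatorVec {n : ℕ} (A B : Finset (Fin n)) :
    dist (indicatorVec A) (indicatorVec B) = Real.sqrt ((symmDiff A B).card) := by
  rw [EuclideanSpace.dist_eq]
  congr 1
  have h : ∀ i : Fin n, dist (indicatorVec A i) (indicatorVec B i) ^ 2
      = if i ∈ symmDiff A B then (1:ℝ) else 0 := by
    intro i
    by_cases hA : i ∈ A <;> by_cases hB : i ∈ B <;>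
      simp [indicatorVec, Real.dist_eq, Finset.mem_symmDiff, hA, hB]
  rw [Finset.sum_congr rfl (fun i _ => h i)]
  simp [Finset.sum_ite_mem]

lemma card_symmDiff_eq {n h : ℕ} {A B : Finset (Fin n)} (hA : A.card = h) (hB : B.card = h) :
    (symmDiff A B).card = 2 * h - 2 * (A ∩ B).card := by
  have h1 : (A \ B).card + (A ∩ B).card = A.card := Finset.card_sdiff_add_card_inter A B
  have h2 : (B \ A).card + (B ∩ A).card = B.card := Finset.card_sdiff_add_card_inter B A
  have hd : Disjoint (A \ B) (B \ A) := by
    exact disjoint_sdiff_sdiff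
  have : (symmDiff A B).card = (A \ B).card + (B \ A).card := by
    rw [symmDiff_def]; exact Finset.card_union_of_disjoint hd
  rw [Finset.inter_comm B A] at h2
  have hle : (A ∩ B).card ≤ h := by
    rw [← hA]; exact Finset.card_le_card (Finset.inter_subset_left)
  omega

lemma indicatorVec_injective {n : ℕ} : Function.Injective (indicatorVec (n := n)) := by
  intro A B hAB
  ext i
  have := congrFun (congrArg WithLp.ofLp hAB) i; clear hAB
  by_cases hA : i ∈ A <;> by_cases hB : i ∈ B <;>
    simp_all [indicatorVec, hA, hB]

lemma dist_indicatorVec_card {n h : ℕ} {A B : Finset (Fin n)}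
    (hA : A.card = h) (hB : B.card = h) :
    dist (indicatorVec A) (indicatorVec B)
      = Real.sqrt ((2 * h - 2 * (A ∩ B).card : ℕ)) := by
  rw [dist_indicatorVec, card_symmDiff_eq hA hB]


/-- Larman's reformulation: if 𝓐 is a family of h-element subsets of {1,…,n},
every two members intersect in at least k elements, and some two distinct members
intersect in exactly k elements (k < h), then b(Tₙ(𝓐)) = ℓ(𝓐,k). -/
theorem borsukNumber_image_eq_larmanNumber (n h k : ℕ) (hkh : k < h)
    (𝓐 : Finset (Finset (Fin n)))
    (hcard : ∀ A ∈ 𝓐, A.card = h)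
    (hoverlap : ∀ A ∈ 𝓐, ∀ A' ∈ 𝓐, k ≤ (A ∩ A').card)
    (hexact : ∃ A ∈ 𝓐, ∃ A' ∈ 𝓐, A ≠ A' ∧ (A ∩ A').card = k) :
    borsukNumber (indicatorVec '' (↑𝓐 : Set (Finset (Fin n)))) =
      larmanNumber k 𝓐 := by
  set X : Set (EuclideanSpace ℝ (Fin n)) := indicatorVec '' (↑𝓐 : Set (Finset (Fin n))) with hX
  have hch : ∀ A ∈ 𝓐, ∀ B ∈ 𝓐, (A ∩ B).card ≤ h := by
    intro A hA B hB
    rw [← hcard A hA]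
    exact Finset.card_le_card Finset.inter_subset_left
  have hXb : Bornology.IsBounded X := ((𝓐.finite_toSet).image _).isBounded
  obtain ⟨A0, hA0, B0, hB0, hne0, hk0⟩ := hexact
  have hdlb : Real.sqrt ((2 * h - 2 * k : ℕ)) ≤ Metric.diam X := by
    have hm1 : indicatorVec A0 ∈ X := Set.mem_image_of_mem _ hA0
    have hm2 : indicatorVec B0 ∈ X := Set.mem_image_of_mem _ hB0
    have := Metric.dist_le_diam_of_mem hXb hm1 hm2
    rwa [dist_indicatorVec_card (hcard A0 hA0) (hcard B0 hB0), hk0] at this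
  have hdub : Metric.diam X ≤ Real.sqrt ((2 * h - 2 * k : ℕ)) := by
    apply Metric.diam_le_of_forall_dist_le (Real.sqrt_nonneg _)
    rintro x ⟨A, hA, rfl⟩ y ⟨B, hB, rfl⟩
    rw [dist_indicatorVec_card (hcard A hA) (hcard B hB)]
    apply Real.sqrt_le_sqrt
    have h1 := hoverlap A hA B hB
    have h2 := hch A hA B hB
    have h3 : (2 * h - 2 * (A ∩ B).card : ℕ) ≤ (2 * h - 2 * k : ℕ) := by omega
    exact_mod_cast h3
  have hdiam : Metric.diam X = Real.sqrt ((2 * h - 2 * k : ℕ)) := le_antisymm hdub hdlb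
  unfold borsukNumber larmanNumber
  congr 1
  ext m
  simp only [Set.mem_setOf_eq]
  constructor
  · rintro ⟨Y, hYu, hYd⟩
    classical
    refine ⟨fun i => 𝓐.filter (fun A => indicatorVec A ∈ Y i), ?_, ?_⟩
    · ext A
      simp only [Finset.mem_biUnion, Finset.mem_filter, Finset.mem_univ, true_and]
      constructor
      · intro hA
        have : indicatorVec A ∈ X := Set.mem_image_of_mem _ hA
        rw [hYu] at this
        obtain ⟨i, hi⟩ := Set.mem_iUnion.mp this
        exact ⟨i, hA, hi⟩
      · rintro ⟨i, hA, _⟩; exact hA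
    · intro i A hA A' hA'
      rw [Finset.mem_filter] at hA hA'
      have hYsub : Y i ⊆ X := by rw [hYu]; exact Set.subset_iUnion Y i
      have hd := Metric.dist_le_diam_of_mem (hXb.subset hYsub) hA.2 hA'.2
      have hlt : dist (indicatorVec A) (indicatorVec A') < Real.sqrt ((2 * h - 2 * k : ℕ)) :=
        lt_of_le_of_lt hd (hdiam ▸ hYd i)
      rw [dist_indicatorVec_card (hcard A hA.1) (hcard A' hA'.1)] at hlt
      by_contra hcon
      push_neg at hcon
      have h1 := hch A hA.1 A' hA'.1
      have : ((2 * h - 2 * k : ℕ) : ℝ) ≤ ((2 * h - 2 * (A ∩ A').card : ℕ) : ℝ) :=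
        Nat.cast_le.mpr (by omega)
      exact absurd hlt (not_lt.mpr (Real.sqrt_le_sqrt this))
  · rintro ⟨ℬ, hBu, hBd⟩
    refine ⟨fun i => indicatorVec '' (↑(ℬ i) : Set (Finset (Fin n))), ?_, ?_⟩
    · rw [hX, hBu, Finset.coe_biUnion, Set.image_iUnion₂]
      simp
    · intro i
      have hsub : ℬ i ⊆ 𝓐 := by
        rw [hBu]; intro A hA
        exact Finset.mem_biUnion.mpr ⟨i, Finset.mem_univ i, hA⟩
      have hle : Metric.diam (indicatorVec '' (↑(ℬ i) : Set (Finset (Fin n))))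
          ≤ Real.sqrt ((2 * h - 2 * (k + 1) : ℕ)) := by
        apply Metric.diam_le_of_forall_dist_le (Real.sqrt_nonneg _)
        rintro x ⟨A, hA, rfl⟩ y ⟨B, hB, rfl⟩
        rw [dist_indicatorVec_card (hcard A (hsub hA)) (hcard B (hsub hB))]
        apply Real.sqrt_le_sqrt
        have h1 := hBd i A hA B hB
        have h2 := hch A (hsub hA) B (hsub hB)
        exact Nat.cast_le.mpr (by omega)
      refine lt_of_le_of_lt hle ?_
      rw [hdiam]
      apply Real.sqrt_lt_sqrt (by positivity)
      exact Nat.cast_lt.mpr (by omega)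
end

section
/- Every n-dimensional centrally symmetric convex body K can be written as a union of n+1 subsets, each of diameter strictly smaller than the diameter of K. -/
/-!
Let `c` be the centre of `K` and `R` the largest distance from `c` to a point of `K`; an
antipodal pair `z`, `2c - z` shows `diam K = 2R`. The vectors `e₁, …, eₙ, -(e₁ + ⋯ + eₙ)/n`
positively span `ℝⁿ`, so by compactness of the unit sphere there is `δ > 0` such that every
`x` lies in one of the `n + 1` cones `δ‖x - c‖ ≤ ⟪vᵢ, x - c⟫`. For `p = x - c`, `q = y - c` in
the same cone, `δ‖p - q‖ ≤ δ(‖p‖ + ‖q‖) ≤ ‖p + q‖`, and the parallelogram law gives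
`(1 + δ²)‖p - q‖² ≤ 2(‖p‖² + ‖q‖²) ≤ 4R²`. Hence each piece of `K` has diameter at most
`2R/√(1 + δ²) < 2R`.
-/

open Metric Set RealInnerProductSpace

theorem Set.nontrivial_of_interior_nonempty {X : Type*} [TopologicalSpace X]
    [∀ x : X, (nhdsWithin x {x}ᶜ).NeBot] {s : Set X} (h : (interior s).Nonempty) :
    s.Nontrivial := by
  obtain ⟨x, hx⟩ := h
  rcases eq_singleton_or_nontrivial (interior_subset hx) with rfl | hs
  · rw [interior_singleton] at hx
    exact absurd hx (notMem_empty x)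
  · exact hs

theorem IsCompact.exists_subset_closedBall_diam_eq {F : Type*} [NormedAddCommGroup F]
    [NormedSpace ℝ F] {K : Set F} (hK : IsCompact K) (hne : K.Nonempty) {c : F}
    (hsymm : ∀ x ∈ K, (2 : ℝ) • c - x ∈ K) :
    ∃ R, K ⊆ closedBall c R ∧ diam K = 2 * R := by
  obtain ⟨z, hzK, hz⟩ := hK.exists_isMaxOn hne (continuous_id.dist continuous_const).continuousOn
  refine ⟨dist z c, fun x hx => hz hx, le_antisymm ?_ ?_⟩
  · exact (diam_mono (fun x hx => hz hx) isBounded_closedBall).trans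
      (diam_closedBall dist_nonneg)
  · calc 2 * dist z c = dist z ((2 : ℝ) • c - z) := by
          rw [dist_eq_norm, dist_eq_norm, show z - ((2 : ℝ) • c - z) = (2 : ℝ) • (z - c) by module,
            norm_smul, Real.norm_two]
      _ ≤ diam K := dist_le_diam_of_mem hK.isBounded hzK (hsymm z hzK)

section InnerProductSpace

variable {E : Type*} [NormedAddCommGroup E] [InnerProductSpace ℝ E]

noncomputable def positiveBasis {n : ℕ} (b : OrthonormalBasis (Fin n) ℝ E) : Fin (n + 1) → E :=
  Fin.snoc (α := fun _ => E) b (-(n : ℝ)⁻¹ • ∑ j, b j)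

theorem norm_positiveBasis_le_one {n : ℕ} (b : OrthonormalBasis (Fin n) ℝ E) (i : Fin (n + 1)) :
    ‖positiveBasis b i‖ ≤ 1 := by
  induction i using Fin.lastCases with
  | last =>
    have hsum : ‖∑ j, b j‖ ≤ n := by
      simpa using norm_sum_le Finset.univ (fun j => b j)
    rw [positiveBasis, Fin.snoc_last, norm_smul, norm_neg, norm_inv, Real.norm_natCast]
    rcases n.eq_zero_or_pos with rfl | hn
    · simp
    · rw [inv_mul_le_iff₀ (by positivity), mul_one]
      exact hsum
  | cast j => simp [positiveBasis, b.orthonormal.1 j]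

theorem exists_inner_positiveBasis_pos {n : ℕ} (b : OrthonormalBasis (Fin n) ℝ E) {x : E}
    (hx : x ≠ 0) : ∃ i, 0 < ⟪positiveBasis b i, x⟫ := by
  by_contra! h
  have hle : ∀ j, ⟪b j, x⟫ ≤ 0 := fun j => by
    simpa [positiveBasis] using h j.castSucc
  have hsum : 0 ≤ ∑ j, ⟪b j, x⟫ := by
    have hlast := h (Fin.last n)
    rw [positiveBasis, Fin.snoc_last, inner_smul_left, sum_inner] at hlast
    rcases n.eq_zero_or_pos with rfl | hn
    · simp
    · have : 0 < (n : ℝ)⁻¹ := by positivity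
      simp only [conj_trivial, neg_mul] at hlast
      nlinarith
  have hzero : ∀ j, ⟪b j, x⟫ = 0 := fun j =>
    le_antisymm (hle j) ((Finset.sum_eq_zero_iff_of_nonpos fun j _ => hle j).mp
      (le_antisymm (Finset.sum_nonpos fun j _ => hle j) hsum) j (Finset.mem_univ j)).ge
  exact hx (by simpa [hzero] using (b.sum_repr' x).symm)

theorem exists_pos_forall_exists_mul_norm_le_inner [ProperSpace E] {ι : Type*} [Fintype ι]
    [Nonempty ι] (v : ι → E) (hv : ∀ x ≠ 0, ∃ i, 0 < ⟪v i, x⟫) :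
    ∃ δ > 0, ∀ x, ∃ i, δ * ‖x‖ ≤ ⟪v i, x⟫ := by
  let f : E → ℝ := fun x => Finset.univ.sup' Finset.univ_nonempty fun i => ⟪v i, x⟫
  have hf : Continuous f :=
    Continuous.finset_sup'_apply _ fun i _ => continuous_const.inner continuous_id
  have hf_pos : ∀ x ∈ sphere (0 : E) 1, 0 < f x := fun x hx => by
    obtain ⟨i, hi⟩ := hv x (ne_zero_of_mem_unit_sphere ⟨x, hx⟩)
    exact Finset.lt_sup'_iff _ |>.mpr ⟨i, Finset.mem_univ i, hi⟩
  obtain ⟨δ, hδ, hδf⟩ := (isCompact_sphere (0 : E) 1).exists_forall_le' hf.continuousOn hf_pos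
  refine ⟨δ, hδ, fun x => ?_⟩
  rcases eq_or_ne x 0 with rfl | hx
  · exact ⟨Classical.arbitrary ι, by simp⟩
  have hx' : 0 < ‖x‖ := norm_pos_iff.mpr hx
  obtain ⟨i, -, hi⟩ := Finset.exists_mem_eq_sup' Finset.univ_nonempty fun i => ⟪v i, ‖x‖⁻¹ • x⟫
  have hunit : ‖x‖⁻¹ • x ∈ sphere (0 : E) 1 := by
    rw [mem_sphere_zero_iff_norm, norm_smul, norm_inv, norm_norm, inv_mul_cancel₀ hx'.ne']
  refine ⟨i, ?_⟩
  have := (hδf _ hunit).trans_eq hi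
  rwa [real_inner_smul_right, le_inv_mul_iff₀ hx', mul_comm] at this

theorem one_add_sq_mul_norm_sub_sq_le {v p q : E} {δ : ℝ} (hv : ‖v‖ ≤ 1) (hδ : 0 ≤ δ)
    (hp : δ * ‖p‖ ≤ ⟪v, p⟫) (hq : δ * ‖q‖ ≤ ⟪v, q⟫) :
    (1 + δ ^ 2) * ‖p - q‖ ^ 2 ≤ 2 * (‖p‖ ^ 2 + ‖q‖ ^ 2) := by
  have hsum : δ * ‖p - q‖ ≤ ‖p + q‖ :=
    calc δ * ‖p - q‖ ≤ δ * (‖p‖ + ‖q‖) := mul_le_mul_of_nonneg_left (norm_sub_le p q) hδ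
      _ ≤ ⟪v, p + q⟫ := by rw [inner_add_right]; linarith
      _ ≤ ‖v‖ * ‖p + q‖ := real_inner_le_norm v (p + q)
      _ ≤ ‖p + q‖ := mul_le_of_le_one_left (norm_nonneg _) hv
  have hsq := pow_le_pow_left₀ (by positivity) hsum 2
  have hpar := parallelogram_law_with_norm ℝ p q
  nlinarith

def coneAt (c v : E) (δ : ℝ) : Set E := {x | δ * ‖x - c‖ ≤ ⟪v, x - c⟫}

theorem diam_inter_coneAt_le {s : Set E} {c v : E} {δ R : ℝ} (hs : s ⊆ closedBall c R)
    (hv : ‖v‖ ≤ 1) (hδ : 0 ≤ δ) (hR : 0 ≤ R) :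
    diam (s ∩ coneAt c v δ) ≤ 2 * R / √(1 + δ ^ 2) := by
  refine diam_le_of_forall_dist_le (by positivity) fun x hx y hy => ?_
  have hxR : ‖x - c‖ ≤ R := mem_closedBall_iff_norm.mp (hs hx.1)
  have hyR : ‖y - c‖ ≤ R := mem_closedBall_iff_norm.mp (hs hy.1)
  have key := one_add_sq_mul_norm_sub_sq_le hv hδ hx.2 hy.2
  rw [sub_sub_sub_cancel_right] at key
  rw [dist_eq_norm, le_div_iff₀ (by positivity),
    ← pow_le_pow_iff_left₀ (by positivity) (by positivity) two_ne_zero, mul_pow,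
    Real.sq_sqrt (by positivity)]
  nlinarith [pow_le_pow_left₀ (norm_nonneg _) hxR 2, pow_le_pow_left₀ (norm_nonneg _) hyR 2]

theorem exists_iUnion_eq_diam_lt_of_centrallySymmetric [ProperSpace E] {ι : Type*} [Fintype ι]
    [Nonempty ι] (v : ι → E) (hv : ∀ i, ‖v i‖ ≤ 1) (hv_pos : ∀ x ≠ 0, ∃ i, 0 < ⟪v i, x⟫)
    {K : Set E} (hK : IsCompact K) (hKnt : K.Nontrivial) {c : E}
    (hsymm : ∀ x ∈ K, (2 : ℝ) • c - x ∈ K) :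
    ∃ X : ι → Set E, K = ⋃ i, X i ∧ ∀ i, diam (X i) < diam K := by
  obtain ⟨δ, hδ, hcover⟩ := exists_pos_forall_exists_mul_norm_le_inner v hv_pos
  obtain ⟨R, hKR, hdiam⟩ := hK.exists_subset_closedBall_diam_eq hKnt.nonempty hsymm
  have hR : 0 < R := by linarith [diam_pos hKnt hK.isBounded]
  refine ⟨fun i => K ∩ coneAt c (v i) δ, ?_, fun i => ?_⟩
  · rw [← inter_iUnion, eq_comm, inter_eq_left]
    exact fun x _ => mem_iUnion.mpr (hcover (x - c))
  · calc diam (K ∩ coneAt c (v i) δ) ≤ 2 * R / √(1 + δ ^ 2) :=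
          diam_inter_coneAt_le hKR (hv i) hδ.le hR.le
      _ < 2 * R := div_lt_self (by positivity) (Real.lt_sqrt_of_sq_lt (by nlinarith))
      _ = diam K := hdiam.symm

end InnerProductSpace

theorem centrally_symmetric_borsuk_general (n : ℕ) (hn : 0 < n)
    (K : Set (EuclideanSpace ℝ (Fin n)))
    (hKc : IsCompact K) (hKint : (interior K).Nonempty)
    (hsymm : ∃ c : EuclideanSpace ℝ (Fin n), ∀ x ∈ K, (2 : ℝ) • c - x ∈ K) :
    ∃ X : Fin (n + 1) → Set (EuclideanSpace ℝ (Fin n)),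
      K = ⋃ i, X i ∧ ∀ i, Metric.diam (X i) < Metric.diam K := by
  obtain ⟨c, hc⟩ := hsymm
  have : Nonempty (Fin n) := ⟨⟨0, hn⟩⟩
  let b := EuclideanSpace.basisFun (Fin n) ℝ
  exact exists_iUnion_eq_diam_lt_of_centrallySymmetric (positiveBasis b)
    (norm_positiveBasis_le_one b) (fun _ hx => exists_inner_positiveBasis_pos b hx) hKc
    (nontrivial_of_interior_nonempty hKint) hc

/-- Riesling: every n-dimensional centrally symmetric convex body can be written as
a union of n+1 subsets, each of diameter strictly smaller than the diameter of the
body. -/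
theorem centrally_symmetric_borsuk (n : ℕ) (hn : 0 < n)
    (K : Set (EuclideanSpace ℝ (Fin n)))
    (hKc : IsCompact K) (hKconv : Convex ℝ K) (hKint : (interior K).Nonempty)
    (hsymm : ∃ c : EuclideanSpace ℝ (Fin n), ∀ x ∈ K, (2 : ℝ) • c - x ∈ K) :
    ∃ X : Fin (n + 1) → Set (EuclideanSpace ℝ (Fin n)),
      K = ⋃ i, X i ∧ ∀ i, Metric.diam (X i) < Metric.diam K :=
  centrally_symmetric_borsuk_general n hn K hKc hKint hsymm
end

section
/- Let m be a positive integer and let K₁ and K₂ be n-dimensional convex bodies with d(K₁) ≥ 2, d(K₂) ≥ 2 and Hausdorff distance δ^H(K₁, K₂) ≤ ε. Then |f_m(K₁) − f_m(K₂)| ≤ 2ε. In particular, the functional f_m is continuous on the space of n-dimensional convex bodies equipped with the Hausdorff metric. -/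
/-!
A cover of `K₂` by `m` pieces of diameter `≤ θ·d(K₂)` induces one of `K₁`: the traces on `K₁`
of the closed `ε`-thickenings of the pieces, each of diameter `≤ θ·d(K₂) + 2ε`. Since also
`d(K₂) ≤ d(K₁) + 2ε` and `f_m ≤ 1`, this gives `f_m(K₁)·d(K₁) ≤ f_m(K₂)·d(K₁) + 4ε`, and
`d(K₁) ≥ 2` turns `4ε` into `2ε` after dividing by `d(K₁)`.
-/

/-- f_m(K): the smallest θ such that K can be written as a union of m subsets, each
of diameter at most θ·d(K). -/
noncomputable def borsukRatio {n : ℕ} (m : ℕ)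
    (K : Set (EuclideanSpace ℝ (Fin n))) : ℝ :=
  sInf {θ : ℝ | ∃ Y : Fin m → Set (EuclideanSpace ℝ (Fin n)),
    K = ⋃ i, Y i ∧ ∀ i, Metric.diam (Y i) ≤ θ * Metric.diam K}

open Metric Set

section Thickening

variable {α : Type*} [PseudoMetricSpace α] {ε : ℝ} {s t : Set α}

theorem subset_cthickening_of_hausdorffDist_le (hfin : hausdorffEDist s t ≠ ⊤)
    (h : hausdorffDist s t ≤ ε) : s ⊆ cthickening ε t := fun _ hx =>
  mem_cthickening_iff.2 <| (infEDist_le_hausdorffEDist_of_mem hx).trans <|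
    (ENNReal.le_ofReal_iff_toReal_le hfin (hausdorffDist_nonneg.trans h)).2 h

theorem diam_le_of_subset_cthickening (ht : Bornology.IsBounded t) (hε : 0 ≤ ε)
    (h : s ⊆ cthickening ε t) : diam s ≤ diam t + 2 * ε :=
  (diam_mono h ht.cthickening).trans (diam_cthickening_le t hε)

theorem IsCompact.cthickening_subset_iUnion_cthickening {ι : Type*} {Y : ι → Set α}
    (ht : IsCompact t) (hε : 0 ≤ ε) (hY : t ⊆ ⋃ i, Y i) :
    cthickening ε t ⊆ ⋃ i, cthickening ε (Y i) := by
  rw [ht.cthickening_eq_biUnion_closedBall hε]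
  refine iUnion₂_subset fun y hy => ?_
  obtain ⟨i, hi⟩ := mem_iUnion.1 (hY hy)
  exact (closedBall_subset_cthickening hi ε).trans
    (subset_iUnion (fun j => cthickening ε (Y j)) i)

end Thickening

section BorsukRatio

variable {n m : ℕ} {K : Set (EuclideanSpace ℝ (Fin n))} {θ : ℝ}

/-- `borsukRatio m K` is by definition `sInf (admissibleRatios m K)`. -/
def admissibleRatios (m : ℕ) (K : Set (EuclideanSpace ℝ (Fin n))) : Set ℝ :=
  {θ : ℝ | ∃ Y : Fin m → Set (EuclideanSpace ℝ (Fin n)),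
    K = ⋃ i, Y i ∧ ∀ i, diam (Y i) ≤ θ * diam K}

theorem nonneg_of_mem_admissibleRatios (hm : 0 < m) (hK : 0 < diam K)
    (hθ : θ ∈ admissibleRatios m K) : 0 ≤ θ := by
  obtain ⟨Y, -, hY⟩ := hθ
  exact nonneg_of_mul_nonneg_left (diam_nonneg.trans (hY ⟨0, hm⟩)) hK

theorem one_mem_admissibleRatios (hm : 0 < m) : (1 : ℝ) ∈ admissibleRatios m K :=
  have : Nonempty (Fin m) := Fin.pos_iff_nonempty.1 hm
  ⟨fun _ => K, (iUnion_const K).symm, fun _ => (one_mul _).ge⟩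

theorem bddBelow_admissibleRatios (hm : 0 < m) (hK : 0 < diam K) :
    BddBelow (admissibleRatios m K) :=
  ⟨0, fun _ => nonneg_of_mem_admissibleRatios hm hK⟩

theorem borsukRatio_nonneg (hm : 0 < m) (hK : 0 < diam K) : 0 ≤ borsukRatio m K :=
  Real.sInf_nonneg fun _ => nonneg_of_mem_admissibleRatios hm hK

theorem borsukRatio_le_of_cover (hm : 0 < m) (hK : 0 < diam K)
    {Y : Fin m → Set (EuclideanSpace ℝ (Fin n))} (hY : K = ⋃ i, Y i)
    (hθ : ∀ i, diam (Y i) ≤ θ * diam K) : borsukRatio m K ≤ θ :=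
  csInf_le (bddBelow_admissibleRatios hm hK) ⟨Y, hY, hθ⟩

theorem borsukRatio_le_one (hm : 0 < m) (hK : 0 < diam K) : borsukRatio m K ≤ 1 :=
  csInf_le (bddBelow_admissibleRatios hm hK) (one_mem_admissibleRatios hm)

theorem exists_cover_of_borsukRatio_lt (hm : 0 < m) (h : borsukRatio m K < θ) :
    ∃ Y : Fin m → Set (EuclideanSpace ℝ (Fin n)),
      K = ⋃ i, Y i ∧ ∀ i, diam (Y i) ≤ θ * diam K := by
  obtain ⟨θ', ⟨Y, hY, hθ'⟩, hlt⟩ :=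
    exists_lt_of_csInf_lt ⟨1, one_mem_admissibleRatios hm⟩ h
  exact ⟨Y, hY, fun i => (hθ' i).trans (mul_le_mul_of_nonneg_right hlt.le diam_nonneg)⟩

theorem borsukRatio_mul_diam_le {K₁ K₂ : Set (EuclideanSpace ℝ (Fin n))} {ε : ℝ}
    (hm : 0 < m) (hK₁ : 0 < diam K₁) (hK₂ : 0 < diam K₂) (hK₂c : IsCompact K₂) (hε : 0 ≤ ε)
    (h : K₁ ⊆ cthickening ε K₂) :
    borsukRatio m K₁ * diam K₁ ≤ borsukRatio m K₂ * diam K₂ + 2 * ε := by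
  refine le_of_forall_pos_le_add fun δ hδ => ?_
  set θ := borsukRatio m K₂ + δ / diam K₂
  obtain ⟨Y, hYK₂, hY⟩ :=
    exists_cover_of_borsukRatio_lt (θ := θ) hm (lt_add_of_pos_right _ (div_pos hδ hK₂))
  have hcover : K₁ = ⋃ i, K₁ ∩ cthickening ε (Y i) := by
    rw [← inter_iUnion, eq_comm, inter_eq_left]
    exact h.trans (hK₂c.cthickening_subset_iUnion_cthickening hε hYK₂.subset)
  have hpieces (i) : diam (K₁ ∩ cthickening ε (Y i)) ≤ θ * diam K₂ + 2 * ε := by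
    have hYi : Bornology.IsBounded (Y i) := hK₂c.isBounded.subset (hYK₂ ▸ subset_iUnion Y i)
    linarith [hY i, diam_le_of_subset_cthickening hYi hε (inter_subset_right (s := K₁))]
  have hf := borsukRatio_le_of_cover (θ := (θ * diam K₂ + 2 * ε) / diam K₁) hm hK₁ hcover
    fun i => (div_mul_cancel₀ _ hK₁.ne').symm ▸ hpieces i
  rw [le_div_iff₀ hK₁] at hf
  have hθ : θ * diam K₂ = borsukRatio m K₂ * diam K₂ + δ := by
    rw [add_mul, div_mul_cancel₀ _ hK₂.ne']
  linarith

theorem borsukRatio_le_add {K₁ K₂ : Set (EuclideanSpace ℝ (Fin n))} {ε : ℝ}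
    (hm : 0 < m) (hK₁c : IsCompact K₁) (hK₂c : IsCompact K₂)
    (hd₁ : 2 ≤ diam K₁) (hd₂ : 0 < diam K₂) (hε : 0 ≤ ε)
    (h₁₂ : K₁ ⊆ cthickening ε K₂) (h₂₁ : K₂ ⊆ cthickening ε K₁) :
    borsukRatio m K₁ ≤ borsukRatio m K₂ + 2 * ε := by
  have hd₁' : 0 < diam K₁ := two_pos.trans_le hd₁
  have hf₁ := borsukRatio_mul_diam_le hm hd₁' hd₂ hK₂c hε h₁₂
  have hd := diam_le_of_subset_cthickening hK₁c.isBounded hε h₂₁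
  have hf₂ := borsukRatio_nonneg hm hd₂
  have hf₂' := borsukRatio_le_one hm hd₂
  rw [← mul_le_mul_iff_left₀ hd₁']
  nlinarith [mul_le_mul_of_nonneg_left hd hf₂]

end BorsukRatio

theorem borsukRatio_lipschitz_general (n m : ℕ) (hm : 0 < m) (ε : ℝ)
    (K₁ K₂ : Set (EuclideanSpace ℝ (Fin n)))
    (hK₁c : IsCompact K₁)
    (hK₂c : IsCompact K₂)
    (hd₁ : 2 ≤ Metric.diam K₁) (hd₂ : 2 ≤ Metric.diam K₂)
    (hH : Metric.hausdorffDist K₁ K₂ ≤ ε) :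
    |borsukRatio m K₁ - borsukRatio m K₂| ≤ 2 * ε := by
  have hε : 0 ≤ ε := hausdorffDist_nonneg.trans hH
  have nonempty {K : Set (EuclideanSpace ℝ (Fin n))} (hd : 2 ≤ diam K) : K.Nonempty :=
    nonempty_iff_ne_empty.2 fun hK => by norm_num [hK] at hd
  have hfin : hausdorffEDist K₁ K₂ ≠ ⊤ :=
    hausdorffEDist_ne_top_of_nonempty_of_bounded (nonempty hd₁) (nonempty hd₂)
      hK₁c.isBounded hK₂c.isBounded
  have h₁₂ := subset_cthickening_of_hausdorffDist_le hfin hH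
  have h₂₁ := subset_cthickening_of_hausdorffDist_le (hausdorffEDist_comm.trans_ne hfin)
    (hausdorffDist_comm.trans_le hH)
  rw [abs_sub_le_iff]
  constructor
  · linarith [borsukRatio_le_add hm hK₁c hK₂c hd₁ (two_pos.trans_le hd₂) hε h₁₂ h₂₁]
  · linarith [borsukRatio_le_add hm hK₂c hK₁c hd₂ (two_pos.trans_le hd₁) hε h₂₁ h₁₂]

/-- The functional f_m is continuous on the space of convex bodies: if K₁, K₂ are
n-dimensional convex bodies with d(K₁) ≥ 2, d(K₂) ≥ 2 and Hausdorff distance at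
most ε, then |f_m(K₁) − f_m(K₂)| ≤ 2ε. -/
theorem borsukRatio_lipschitz (n m : ℕ) (hm : 0 < m) (ε : ℝ)
    (K₁ K₂ : Set (EuclideanSpace ℝ (Fin n)))
    (hK₁c : IsCompact K₁) (hK₁conv : Convex ℝ K₁) (hK₁int : (interior K₁).Nonempty)
    (hK₂c : IsCompact K₂) (hK₂conv : Convex ℝ K₂) (hK₂int : (interior K₂).Nonempty)
    (hd₁ : 2 ≤ Metric.diam K₁) (hd₂ : 2 ≤ Metric.diam K₂)
    (hH : Metric.hausdorffDist K₁ K₂ ≤ ε) :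
    |borsukRatio m K₁ - borsukRatio m K₂| ≤ 2 * ε :=
  borsukRatio_lipschitz_general n m hm ε K₁ K₂ hK₁c hK₂c hd₁ hd₂ hH
end

section
/- Let 1 ≤ p ≤ ∞ and equip ℝ³ with the ℓ_p norm. Then every bounded set X in this three-dimensional ℓ_p space with positive ℓ_p-diameter can be written as a union of 8 subsets, each of ℓ_p-diameter strictly smaller than the ℓ_p-diameter of X. -/
/-!
Halving the range of a real function on `X` splits `X` into two parts on each of which the
function varies by at most half as much; doing this for three functions gives 8 parts.
Let `d = diam X`. For `p = ∞` cut along the coordinates: every part has diameter `≤ d / 2`.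
For `1 < p < ∞` cut along `x₀`, `x₁ + x₂`, `x₁ - x₂`: as `|a| + |b| = max |a + b| |a - b|`,
on each part `|Δx₀| ≤ d / 2` and `|Δx₁| + |Δx₂| ≤ 2 ^ (-1 / p) * d`, so
`‖Δx‖ₚ ^ p ≤ (2 ^ (-p) + 1 / 2) * d ^ p < d ^ p`.
For `p = 1` the same cut works unless the width of `X` in `x₀` equals `d`. Then the two extreme
points (attained on the compact closure) differ only in `x₀`, so `X` lies in an `ℓ₁`-ball of
radius `d / 2`; the six caps `±(xᵢ - mᵢ) ≥ d / 8` and the cube `|xᵢ - mᵢ| ≤ d / 8` cover it,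
and each has diameter `≤ 3 * d / 4`.
-/

open Bornology Metric Set
open scoped ENNReal

namespace Real

lemma rpow_add_le_mul_rpow_add_rpow {p a b : ℝ} (ha : 0 ≤ a) (hb : 0 ≤ b) (hp : 1 ≤ p) :
    (a + b) ^ p ≤ 2 ^ (p - 1) * (a ^ p + b ^ p) := by
  lift a to NNReal using ha
  lift b to NNReal using hb
  exact_mod_cast NNReal.rpow_add_le_mul_rpow_add_rpow a b hp

lemma two_rpow_neg_add_half_rpow_one_div_lt_one {p : ℝ} (hp : 1 < p) :
    ((2 : ℝ) ^ (-p) + 1 / 2) ^ (1 / p) < 1 := by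
  refine rpow_lt_one (by positivity) ?_ (by positivity)
  have : (2 : ℝ) ^ (-p) < 2 ^ (-1 : ℝ) := rpow_lt_rpow_of_exponent_lt one_lt_two (by linarith)
  rw [rpow_neg_one] at this
  linarith

end Real

lemma abs_add_abs_le_of_abs_add_le_of_abs_sub_le {a b c : ℝ} (h₁ : |a + b| ≤ c)
    (h₂ : |a - b| ≤ c) : |a| + |b| ≤ c := by
  rw [abs_le] at h₁ h₂
  rcases abs_cases a with ⟨ha, _⟩ | ⟨ha, _⟩ <;> rcases abs_cases b with ⟨hb, _⟩ | ⟨hb, _⟩ <;>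
    linarith

lemma two_mul_le_abs_add_abs_sub_abs_sub {a b t : ℝ} (ha : t ≤ a) (hb : t ≤ b) :
    2 * t ≤ |a| + |b| - |a - b| := by
  rcases abs_cases (a - b) with ⟨h, _⟩ | ⟨h, _⟩ <;> rw [h] <;>
    linarith [le_abs_self a, le_abs_self b]

section Halving

variable {α : Type*}

theorem exists_abs_sub_le_half_of_le_iff_le (X : Set α) (f : α → ℝ) {r : ℝ}
    (hr : ∀ x ∈ X, ∀ y ∈ X, f x - f y ≤ r) :
    ∃ c, ∀ x ∈ X, ∀ y ∈ X, (f x ≤ c ↔ f y ≤ c) → |f x - f y| ≤ r / 2 := by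
  rcases X.eq_empty_or_nonempty with rfl | ⟨x₀, hx₀⟩
  · exact ⟨0, by simp⟩
  have hbdd : BddBelow (f '' X) :=
    ⟨f x₀ - r, by rintro _ ⟨y, hy, rfl⟩; linarith [hr x₀ hx₀ y hy]⟩
  set m := sInf (f '' X)
  have hm_le : ∀ x ∈ X, m ≤ f x := fun x hx => csInf_le hbdd ⟨x, hx, rfl⟩
  have hle_m : ∀ x ∈ X, f x ≤ m + r := fun x hx => by
    have : f x - r ≤ m := le_csInf ⟨f x₀, x₀, hx₀, rfl⟩ (by
      rintro _ ⟨y, hy, rfl⟩; linarith [hr x hx y hy])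
    linarith
  refine ⟨m + r / 2, fun x hx y hy hxy => abs_le.2 ?_⟩
  by_cases h : f x ≤ m + r / 2
  · have := hxy.1 h
    constructor <;> linarith [hm_le x hx, hm_le y hy]
  · have := mt hxy.2 h
    constructor <;> linarith [hle_m x hx, hle_m y hy]

theorem exists_iUnion_eq_forall_abs_sub_le_half {n : ℕ} (X : Set α) (f : Fin n → α → ℝ)
    (r : Fin n → ℝ) (hr : ∀ i, ∀ x ∈ X, ∀ y ∈ X, f i x - f i y ≤ r i) :
    ∃ Y : Fin (2 ^ n) → Set α, X = ⋃ k, Y k ∧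
      ∀ k, ∀ x ∈ Y k, ∀ y ∈ Y k, ∀ i, |f i x - f i y| ≤ r i / 2 := by
  classical
  choose c hc using fun i => exists_abs_sub_le_half_of_le_iff_le X (f i) (hr i)
  let side (x : α) : Fin (2 ^ n) :=
    finFunctionFinEquiv fun i => if f i x ≤ c i then 0 else 1
  refine ⟨fun k => {x ∈ X | side x = k}, ?_, ?_⟩
  · ext x
    simp
  · rintro k x ⟨hx, rfl⟩ y ⟨hy, hxy⟩ i
    refine hc i x hx y hy ?_
    have := congr_fun (finFunctionFinEquiv.injective hxy) i
    by_cases hxi : f i x ≤ c i <;> by_cases hyi : f i y ≤ c i <;> simp [hxi, hyi] at this ⊢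

theorem exists_iUnion_eq_abs_sub_le_half_and_abs_sub_add_abs_sub_le_half (X : Set α)
    (u v w : α → ℝ) {r₀ r : ℝ} (hu : ∀ x ∈ X, ∀ y ∈ X, u x - u y ≤ r₀)
    (hvw : ∀ x ∈ X, ∀ y ∈ X, |v x - v y| + |w x - w y| ≤ r) :
    ∃ Y : Fin 8 → Set α, X = ⋃ k, Y k ∧ ∀ k, ∀ x ∈ Y k, ∀ y ∈ Y k,
      |u x - u y| ≤ r₀ / 2 ∧ |v x - v y| + |w x - w y| ≤ r / 2 := by
  have hsum (x y : α) : |(v x + w x) - (v y + w y)| ≤ |v x - v y| + |w x - w y| := by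
    rw [add_sub_add_comm]; exact abs_add_le _ _
  have hdiff (x y : α) : |(v x - w x) - (v y - w y)| ≤ |v x - v y| + |w x - w y| := by
    rw [sub_sub_sub_comm]; exact abs_sub _ _
  obtain ⟨Y, hXY, hY⟩ := exists_iUnion_eq_forall_abs_sub_le_half X
    ![u, v + w, v - w] ![r₀, r, r] (by
      intro i x hx y hy
      fin_cases i
      · exact hu x hx y hy
      · exact (le_abs_self _).trans ((hsum x y).trans (hvw x hx y hy))
      · exact (le_abs_self _).trans ((hdiff x y).trans (hvw x hx y hy)))
  refine ⟨Y, hXY, fun k x hx y hy => ⟨hY k x hx y hy 0, ?_⟩⟩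
  apply abs_add_abs_le_of_abs_add_le_of_abs_sub_le
  · simpa [add_sub_add_comm] using hY k x hx y hy 1
  · simpa [sub_sub_sub_comm] using hY k x hx y hy 2

end Halving

namespace PiLp

variable {ι : Type*} [Fintype ι]

lemma dist_rpow_eq_sum {p : ℝ≥0∞} (hp : 0 < p.toReal) {β : ι → Type*}
    [∀ i, PseudoMetricSpace (β i)] (x y : PiLp p β) :
    dist x y ^ p.toReal = ∑ i, dist (x i) (y i) ^ p.toReal := by
  rw [dist_eq_sum hp, ← Real.rpow_mul (by positivity), one_div, inv_mul_cancel₀ hp.ne',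
    Real.rpow_one]

lemma dist_le_dist_add_dist_sub_of_L1 {β : ι → Type*} [∀ i, SeminormedAddCommGroup (β i)]
    (x y m : PiLp 1 β) (i : ι) :
    dist x y ≤ dist x m + dist y m - (dist (x i) (m i) + dist (y i) (m i) - dist (x i) (y i)) := by
  classical
  simp only [dist_eq_of_L1]
  rw [← Finset.add_sum_erase _ _ (Finset.mem_univ i),
    ← Finset.add_sum_erase _ _ (Finset.mem_univ i), ← Finset.add_sum_erase _ _ (Finset.mem_univ i)]
  have := Finset.sum_le_sum fun j (_ : j ∈ Finset.univ.erase i) =>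
    dist_triangle_right (x j) (y j) (m j)
  rw [Finset.sum_add_distrib] at this
  linarith

theorem exists_iUnion_eq_diam_le_half_of_top {n : ℕ} {X : Set (PiLp ∞ (fun _ : Fin n => ℝ))}
    (hX : IsBounded X) :
    ∃ Y : Fin (2 ^ n) → Set (PiLp ∞ (fun _ : Fin n => ℝ)), X = ⋃ k, Y k ∧
      ∀ k, diam (Y k) ≤ diam X / 2 := by
  obtain ⟨Y, hXY, hY⟩ := exists_iUnion_eq_forall_abs_sub_le_half X (fun i x => x i)
    (fun _ => diam X) fun i x hx y hy => (le_abs_self _).trans <|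
      (Real.dist_eq (x i) (y i) ▸ dist_apply_le x y i).trans (dist_le_diam_of_mem hX hx hy)
  refine ⟨Y, hXY, fun k => diam_le_of_forall_dist_le (by positivity) fun x hx y hy => ?_⟩
  rw [dist_eq_iSup]
  exact Real.iSup_le (fun i => (Real.dist_eq _ _).trans_le (hY k x hx y hy i)) (by positivity)

section Lp

variable {p : ℝ≥0∞} [Fact (1 ≤ p)]

lemma one_le_toReal (hp : p ≠ ∞) : 1 ≤ p.toReal :=
  ENNReal.toReal_one ▸ ENNReal.toReal_mono hp Fact.out

lemma dist_rpow_eq_of_fin_three (hp : p ≠ ∞) (x y : PiLp p (fun _ : Fin 3 => ℝ)) :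
    dist x y ^ p.toReal =
      |x 0 - y 0| ^ p.toReal + |x 1 - y 1| ^ p.toReal + |x 2 - y 2| ^ p.toReal := by
  simp [dist_rpow_eq_sum (zero_lt_one.trans_le (one_le_toReal hp)), Fin.sum_univ_three,
    Real.dist_eq]

lemma abs_sub_add_abs_sub_le (hp : p ≠ ∞) (x y : PiLp p (fun _ : Fin 3 => ℝ)) :
    |x 1 - y 1| + |x 2 - y 2| ≤ 2 * 2 ^ (-1 / p.toReal) * dist x y := by
  have hP := one_le_toReal hp
  rw [← Real.rpow_le_rpow_iff (by positivity) (by positivity) (by positivity : 0 < p.toReal)]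
  calc (|x 1 - y 1| + |x 2 - y 2|) ^ p.toReal
      ≤ 2 ^ (p.toReal - 1) * (|x 1 - y 1| ^ p.toReal + |x 2 - y 2| ^ p.toReal) :=
        Real.rpow_add_le_mul_rpow_add_rpow (abs_nonneg _) (abs_nonneg _) hP
    _ ≤ 2 ^ (p.toReal - 1) * dist x y ^ p.toReal := by
        gcongr
        linarith [dist_rpow_eq_of_fin_three hp x y,
          Real.rpow_nonneg (abs_nonneg (x 0 - y 0)) p.toReal]
    _ = (2 * 2 ^ (-1 / p.toReal) * dist x y) ^ p.toReal := by
        rw [Real.mul_rpow (by positivity) dist_nonneg,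
          Real.mul_rpow (by positivity) (by positivity), ← Real.rpow_mul zero_le_two,
          div_mul_cancel₀ _ (by positivity : p.toReal ≠ 0), Real.rpow_sub_one two_ne_zero,
          Real.rpow_neg_one]
        ring

theorem exists_iUnion_eq_diam_le_of_ne_top (hp : p ≠ ∞) {X : Set (PiLp p (fun _ : Fin 3 => ℝ))}
    (hX : IsBounded X) :
    ∃ Y : Fin 8 → Set (PiLp p (fun _ : Fin 3 => ℝ)), X = ⋃ k, Y k ∧
      ∀ k, diam (Y k) ≤ ((2 : ℝ) ^ (-p.toReal) + 1 / 2) ^ (1 / p.toReal) * diam X := by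
  have hP := one_le_toReal hp
  have hP₀ : 0 < p.toReal := by positivity
  set d := diam X
  obtain ⟨Y, hXY, hY⟩ := exists_iUnion_eq_abs_sub_le_half_and_abs_sub_add_abs_sub_le_half X
    (· 0) (· 1) (· 2) (r₀ := d) (r := 2 * 2 ^ (-1 / p.toReal) * d)
    (fun x hx y hy => (le_abs_self _).trans <|
      (Real.dist_eq (x 0) (y 0) ▸ dist_apply_le x y 0).trans (dist_le_diam_of_mem hX hx hy))
    (fun x hx y hy => (abs_sub_add_abs_sub_le hp x y).trans <|
      mul_le_mul_of_nonneg_left (dist_le_diam_of_mem hX hx hy) (by positivity))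
  refine ⟨Y, hXY, fun k => diam_le_of_forall_dist_le (by positivity) fun x hx y hy => ?_⟩
  obtain ⟨h₀, h₁₂⟩ := hY k x hx y hy
  rw [← Real.rpow_le_rpow_iff dist_nonneg (by positivity) hP₀]
  calc dist x y ^ p.toReal
      = |x 0 - y 0| ^ p.toReal + (|x 1 - y 1| ^ p.toReal + |x 2 - y 2| ^ p.toReal) := by
        rw [dist_rpow_eq_of_fin_three hp, add_assoc]
    _ ≤ |x 0 - y 0| ^ p.toReal + (|x 1 - y 1| + |x 2 - y 2|) ^ p.toReal := by
        gcongr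
        exact Real.add_rpow_le_rpow_add (abs_nonneg _) (abs_nonneg _) hP
    _ ≤ (d / 2) ^ p.toReal + (2 * 2 ^ (-1 / p.toReal) * d / 2) ^ p.toReal := by
        gcongr
    _ = (((2 : ℝ) ^ (-p.toReal) + 1 / 2) ^ (1 / p.toReal) * d) ^ p.toReal := by
        have hd : 0 ≤ d := diam_nonneg
        rw [show 2 * 2 ^ (-1 / p.toReal) * d / 2 = 2 ^ (-1 / p.toReal) * d by ring,
          Real.mul_rpow (by positivity) hd, Real.mul_rpow (by positivity) hd,
          ← Real.rpow_mul zero_le_two, ← Real.rpow_mul (by positivity),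
          Real.div_rpow hd zero_le_two, Real.rpow_neg zero_le_two, one_div_mul_cancel hP₀.ne',
          div_mul_cancel₀ _ hP₀.ne', Real.rpow_one, Real.rpow_neg_one]
        ring

end Lp

section L1

variable {X : Set (PiLp 1 (fun _ : Fin 3 => ℝ))}

lemma dist_eq_of_L1_fin_three (x y : PiLp 1 (fun _ : Fin 3 => ℝ)) :
    dist x y = |x 0 - y 0| + |x 1 - y 1| + |x 2 - y 2| := by
  simp [dist_eq_of_L1, Fin.sum_univ_three, Real.dist_eq]

theorem exists_iUnion_eq_diam_le_of_forall_sub_le_L1 (hX : IsBounded X) {R : ℝ} (hR₀ : 0 ≤ R)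
    (hR : ∀ x ∈ X, ∀ y ∈ X, x 0 - y 0 ≤ R) :
    ∃ Y : Fin 8 → Set (PiLp 1 (fun _ : Fin 3 => ℝ)), X = ⋃ k, Y k ∧
      ∀ k, diam (Y k) ≤ (R + diam X) / 2 := by
  obtain ⟨Y, hXY, hY⟩ := exists_iUnion_eq_abs_sub_le_half_and_abs_sub_add_abs_sub_le_half X
    (· 0) (· 1) (· 2) hR (r := diam X) fun x hx y hy => by
      linarith [dist_eq_of_L1_fin_three x y, dist_le_diam_of_mem hX hx hy, abs_nonneg (x 0 - y 0)]
  refine ⟨Y, hXY, fun k => diam_le_of_forall_dist_le (by positivity) fun x hx y hy => ?_⟩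
  linarith [dist_eq_of_L1_fin_three x y, hY k x hx y hy]

theorem subset_closedBall_midpoint_of_L1 {u v : PiLp 1 (fun _ : Fin 3 => ℝ)} {d : ℝ}
    (huv₀ : u 0 - v 0 = d) (huv : dist u v ≤ d) (hu : ∀ x ∈ X, dist x u ≤ d)
    (hv : ∀ x ∈ X, dist x v ≤ d) : X ⊆ closedBall (midpoint ℝ u v) (d / 2) := by
  have hm (i : Fin 3) : midpoint ℝ u v i = (u i + v i) / 2 := by
    simp only [midpoint_eq_smul_add, smul_apply, add_apply, smul_eq_mul, invOf_eq_inv]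
    ring
  rw [dist_eq_of_L1_fin_three, huv₀] at huv
  have hzero : |u 1 - v 1| + |u 2 - v 2| ≤ 0 := by linarith [le_abs_self d]
  have h₁ : u 1 = v 1 := sub_eq_zero.1 (abs_nonpos_iff.1 (by linarith [abs_nonneg (u 2 - v 2)]))
  have h₂ : u 2 = v 2 := sub_eq_zero.1 (abs_nonpos_iff.1 (by linarith [abs_nonneg (u 1 - v 1)]))
  intro x hx
  have hxu := hu x hx
  have hxv := hv x hx
  rw [dist_eq_of_L1_fin_three] at hxu
  rw [dist_eq_of_L1_fin_three, ← h₁, ← h₂] at hxv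
  rw [mem_closedBall, dist_eq_of_L1_fin_three, hm, hm, hm, ← h₁, ← h₂, add_self_div_two,
    add_self_div_two]
  have : |x 0 - (u 0 + v 0) / 2| ≤ d / 2 - (|x 1 - u 1| + |x 2 - u 2|) := abs_le.2
    ⟨by linarith [neg_abs_le (x 0 - u 0)], by linarith [le_abs_self (x 0 - v 0)]⟩
  linarith

theorem exists_iUnion_eq_diam_le_of_subset_closedBall_L1 {m : PiLp 1 (fun _ : Fin 3 => ℝ)}
    {ρ : ℝ} (hρ : 0 ≤ ρ) (hX : X ⊆ closedBall m ρ) :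
    ∃ Y : Fin 8 → Set (PiLp 1 (fun _ : Fin 3 => ℝ)), X = ⋃ k, Y k ∧
      ∀ k, diam (Y k) ≤ 3 / 2 * ρ := by
  set t := ρ / 4 with ht
  let cap (i : Fin 3) (s : ℝ) := {x ∈ X | t ≤ s * (x i - m i)}
  let cube := {x ∈ X | ∀ i, |x i - m i| ≤ t}
  have hcap (i : Fin 3) (s : ℝ) (hs : |s| = 1) :
      ∀ x ∈ cap i s, ∀ y ∈ cap i s, dist x y ≤ 3 / 2 * ρ := by
    rintro x ⟨hxX, hx⟩ y ⟨hyX, hy⟩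
    -- `x` and `y` lie on the same side of `m` in coordinate `i`, so there the triangle
    -- inequality through `m` overestimates `|x i - y i|` by at least `2 * t`
    have hgap := two_mul_le_abs_add_abs_sub_abs_sub hx hy
    rw [← mul_sub, abs_mul, abs_mul, abs_mul, hs, one_mul, one_mul, one_mul,
      sub_sub_sub_cancel_right] at hgap
    have := dist_le_dist_add_dist_sub_of_L1 x y m i
    rw [Real.dist_eq, Real.dist_eq, Real.dist_eq] at this
    linarith [mem_closedBall.1 (hX hxX), mem_closedBall.1 (hX hyX)]
  have hcube : ∀ x ∈ cube, ∀ y ∈ cube, dist x y ≤ 3 / 2 * ρ := by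
    rintro x ⟨-, hx⟩ y ⟨-, hy⟩
    rw [dist_eq_of_L1]
    calc ∑ i, dist (x i) (y i) ≤ ∑ _i : Fin 3, 2 * t := Finset.sum_le_sum fun i _ => by
          have := dist_triangle_right (x i) (y i) (m i)
          simp only [Real.dist_eq] at this ⊢
          linarith [hx i, hy i]
      _ = 3 / 2 * ρ := by simp only [Finset.sum_const, Finset.card_univ, Fintype.card_fin]; ring
  refine ⟨![cap 0 1, cap 0 (-1), cap 1 1, cap 1 (-1), cap 2 1, cap 2 (-1), cube, ∅], ?_, ?_⟩
  · refine Subset.antisymm (fun x hx => ?_) (iUnion_subset fun k => ?_)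
    · by_cases h : ∀ i, |x i - m i| ≤ t
      · exact mem_iUnion.2 ⟨6, hx, h⟩
      obtain ⟨i, hi⟩ := not_forall.1 h
      have hsign : t ≤ 1 * (x i - m i) ∨ t ≤ -1 * (x i - m i) := by
        rcases lt_abs.1 (not_le.1 hi) with hi | hi
        exacts [Or.inl (by linarith), Or.inr (by linarith)]
      rcases hsign with hs | hs <;> fin_cases i
      exacts [mem_iUnion_of_mem 0 ⟨hx, hs⟩, mem_iUnion_of_mem 2 ⟨hx, hs⟩,
        mem_iUnion_of_mem 4 ⟨hx, hs⟩, mem_iUnion_of_mem 1 ⟨hx, hs⟩, mem_iUnion_of_mem 3 ⟨hx, hs⟩,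
        mem_iUnion_of_mem 5 ⟨hx, hs⟩]
    · fin_cases k <;> simp [cap, cube, sep_subset]
  · intro k
    apply diam_le_of_forall_dist_le (by positivity)
    fin_cases k
    exacts [hcap 0 1 (by simp), hcap 0 (-1) (by simp), hcap 1 1 (by simp), hcap 1 (-1) (by simp),
      hcap 2 1 (by simp), hcap 2 (-1) (by simp), hcube, by simp]

theorem exists_iUnion_eq_diam_lt_of_L1 (hX : IsBounded X) (hd : 0 < diam X) :
    ∃ δ < diam X, ∃ Y : Fin 8 → Set (PiLp 1 (fun _ : Fin 3 => ℝ)), X = ⋃ k, Y k ∧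
      ∀ k, diam (Y k) ≤ δ := by
  have hne : (closure X).Nonempty :=
    (nonempty_iff_ne_empty.2 (by rintro rfl; simp at hd)).closure
  have hK := hX.isCompact_closure
  obtain ⟨⟨u, v⟩, ⟨hu, hv⟩, hmax⟩ := (hK.prod hK).exists_isMaxOn (hne.prod hne)
    (show Continuous fun q : PiLp 1 (fun _ : Fin 3 => ℝ) × PiLp 1 (fun _ : Fin 3 => ℝ) =>
      q.1 0 - q.2 0 by fun_prop).continuousOn
  have hdist : ∀ x ∈ closure X, ∀ y ∈ closure X, dist x y ≤ diam X := fun x hx y hy =>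
    diam_closure X ▸ dist_le_diam_of_mem hX.closure hx hy
  have hR : ∀ x ∈ X, ∀ y ∈ X, x 0 - y 0 ≤ u 0 - v 0 := fun x hx y hy =>
    hmax (mk_mem_prod (subset_closure hx) (subset_closure hy))
  have hRd : u 0 - v 0 ≤ diam X := (le_abs_self _).trans <| by
    simpa only [Real.dist_eq] using (dist_apply_le u v 0).trans (hdist u hu v hv)
  rcases hRd.lt_or_eq with hlt | heq
  · have hR₀ : (0 : ℝ) ≤ u 0 - v 0 := by simpa using hmax (mk_mem_prod hu hu)
    exact ⟨_, by linarith, exists_iUnion_eq_diam_le_of_forall_sub_le_L1 hX hR₀ hR⟩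
  · have hball := subset_closedBall_midpoint_of_L1 heq (hdist u hu v hv)
      (fun x hx => hdist x (subset_closure hx) u hu)
      (fun x hx => hdist x (subset_closure hx) v hv)
    exact ⟨3 / 2 * (diam X / 2), by linarith,
      exists_iUnion_eq_diam_le_of_subset_closedBall_L1 (by positivity) hball⟩

end L1

end PiLp

/-- Yu–Zong: in the three-dimensional ℓ_p space (1 ≤ p ≤ ∞), every bounded set of
positive diameter can be written as a union of 8 subsets, each of ℓ_p-diameter
strictly smaller than that of X. -/
theorem borsuk_lp_three_dim (p : ENNReal) [Fact (1 ≤ p)]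
    (X : Set (PiLp p (fun _ : Fin 3 => ℝ))) (hX : Bornology.IsBounded X)
    (hd : 0 < Metric.diam X) :
    ∃ Y : Fin 8 → Set (PiLp p (fun _ : Fin 3 => ℝ)),
      X = ⋃ i, Y i ∧ ∀ i, Metric.diam (Y i) < Metric.diam X := by
  suffices ∃ δ < diam X, ∃ Y : Fin 8 → Set (PiLp p (fun _ : Fin 3 => ℝ)),
      X = ⋃ k, Y k ∧ ∀ k, diam (Y k) ≤ δ by
    obtain ⟨δ, hδ, Y, hXY, hY⟩ := this
    exact ⟨Y, hXY, fun k => (hY k).trans_lt hδ⟩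
  rcases eq_or_ne p ∞ with rfl | hp
  · exact ⟨_, half_lt_self hd, PiLp.exists_iUnion_eq_diam_le_half_of_top hX⟩
  rcases (Fact.out : 1 ≤ p).eq_or_lt with rfl | hp₁
  · exact PiLp.exists_iUnion_eq_diam_lt_of_L1 hX hd
  · have hc := Real.two_rpow_neg_add_half_rpow_one_div_lt_one
      (ENNReal.toReal_one ▸ ENNReal.toReal_strict_mono hp hp₁)
    exact ⟨_, mul_lt_of_lt_one_left hd hc, PiLp.exists_iUnion_eq_diam_le_of_ne_top hp hX⟩
end

section
/- Let 1 ≤ p ≤ ∞ and equip ℝ^n with the ℓ_p norm. Then every bounded centrally symmetric set X in this n-dimensional ℓ_p space with positive ℓ_p-diameter can be written as a union of m subsets each of ℓ_p-diameter strictly smaller than the ℓ_p-diameter of X, where m = 2n if p = 1, m = n+1 if 1 < p < ∞, and m = 2^n if p = ∞. -/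
/-!
A set `X` symmetric about `c` lies in the closed ball of radius `diam X / 2` about `c`. Cover
the space by finitely many closed cones `S` containing no pair `u ≠ 0`, `v` with `‖u‖ = ‖v‖`
and `‖u - v‖ = ‖u‖ + ‖v‖`. By compactness the diameter of `S ∩ closedBall 0 r` is attained,
hence `< 2 r`, so the pieces `X ∩ (c + S)` have diameter `< diam X`. For `p = ∞` the `2ⁿ`
orthants are such cones, for `p = 1` the `2n` cones `|aⱼ| ≤ ±aᵢ` around the axes. For
`1 < p < ∞` the norm is strictly convex, so it suffices that `S ∩ -S = {0}`; this holds for the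
`n + 1` cones on which one of `a₁, …, aₙ, -∑ aᵢ` is the largest.
-/

open Set Metric Bornology

theorem strictConvexOn_norm_rpow {F : Type*} [NormedAddCommGroup F] [NormedSpace ℝ F]
    [StrictConvexSpace ℝ F] {q : ℝ} (hq : 1 < q) :
    StrictConvexOn ℝ univ fun x : F => ‖x‖ ^ q := by
  refine ⟨convex_univ, fun x _ y _ hxy a b ha hb hab => ?_⟩
  simp only [smul_eq_mul]
  rcases eq_or_ne ‖x‖ ‖y‖ with hn | hn
  · have hlt : ‖a • x + b • y‖ < ‖x‖ := norm_combo_lt_of_ne le_rfl hn.ge hxy ha hb hab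
    calc ‖a • x + b • y‖ ^ q < ‖x‖ ^ q := by gcongr
      _ = a * ‖x‖ ^ q + b * ‖y‖ ^ q := by rw [← hn, ← add_mul, hab, one_mul]
  · calc ‖a • x + b • y‖ ^ q ≤ (a * ‖x‖ + b * ‖y‖) ^ q := by
          gcongr
          refine (norm_add_le _ _).trans_eq ?_
          rw [norm_smul_of_nonneg ha.le, norm_smul_of_nonneg hb.le]
      _ < a * ‖x‖ ^ q + b * ‖y‖ ^ q :=
          (strictConvexOn_rpow hq).2 (norm_nonneg x) (norm_nonneg y) hn ha hb hab

theorem PiLp.norm_rpow_eq_sum {ι : Type*} [Fintype ι] {p : ENNReal} {β : ι → Type*}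
    [∀ i, SeminormedAddCommGroup (β i)] (hp : 0 < p.toReal) (x : PiLp p β) :
    ‖x‖ ^ p.toReal = ∑ i, ‖x i‖ ^ p.toReal := by
  rw [PiLp.norm_eq_sum hp, ← Real.rpow_mul (by positivity), one_div_mul_cancel hp.ne',
    Real.rpow_one]

theorem PiLp.strictConvexSpace {ι : Type*} [Fintype ι] {p : ENNReal} [Fact (1 ≤ p)]
    {β : ι → Type*} [∀ i, NormedAddCommGroup (β i)] [∀ i, NormedSpace ℝ (β i)]
    [∀ i, StrictConvexSpace ℝ (β i)] (hp : 1 < p) (hp' : p ≠ ⊤) :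
    StrictConvexSpace ℝ (PiLp p β) := by
  have hq : 1 < p.toReal := by
    simpa using ENNReal.toReal_strict_mono hp' hp
  have hq0 : 0 < p.toReal := one_pos.trans hq
  refine StrictConvexSpace.of_norm_combo_lt_one fun x y hx hy hxy =>
    ⟨1 / 2, 1 / 2, by norm_num, ?_⟩
  obtain ⟨i, hi⟩ : ∃ i, x i ≠ y i := by
    by_contra! h
    exact hxy (PiLp.ext h)
  have hsum : ‖(1 / 2 : ℝ) • x + (1 / 2 : ℝ) • y‖ ^ p.toReal < 1 := by
    calc ‖(1 / 2 : ℝ) • x + (1 / 2 : ℝ) • y‖ ^ p.toReal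
        = ∑ j, ‖(1 / 2 : ℝ) • x j + (1 / 2 : ℝ) • y j‖ ^ p.toReal :=
          PiLp.norm_rpow_eq_sum hq0 _
      _ < ∑ j, ((1 / 2 : ℝ) * ‖x j‖ ^ p.toReal + (1 / 2 : ℝ) * ‖y j‖ ^ p.toReal) := by
        refine Finset.sum_lt_sum (fun j _ => ?_) ⟨i, Finset.mem_univ i, ?_⟩
        · exact (strictConvexOn_norm_rpow hq).convexOn.2 (mem_univ _) (mem_univ _) (by norm_num)
            (by norm_num) (by norm_num)
        · exact (strictConvexOn_norm_rpow hq).2 (mem_univ _) (mem_univ _) hi (by norm_num)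
            (by norm_num) (by norm_num)
      _ = 1 := by
        rw [Finset.sum_add_distrib, ← Finset.mul_sum, ← Finset.mul_sum,
          ← PiLp.norm_rpow_eq_sum hq0, ← PiLp.norm_rpow_eq_sum hq0, hx, hy]
        norm_num
  by_contra! h
  exact hsum.not_ge (Real.one_le_rpow h hq0.le)

section NormedGroup

variable {E : Type*} [NormedAddCommGroup E]

def NoDiametralPair (S : Set E) : Prop :=
  ∀ u ∈ S, ∀ v ∈ S, u ≠ 0 → ‖u‖ = ‖v‖ → ‖u - v‖ < ‖u‖ + ‖v‖

theorem noDiametralPair_of_neg_mem_imp_eq_zero [NormedSpace ℝ E] [StrictConvexSpace ℝ E]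
    {S : Set E} (hS : ∀ u ∈ S, -u ∈ S → u = 0) : NoDiametralPair S := by
  intro u hu v hv hu0 huv
  refine (norm_sub_le u v).lt_of_ne fun h => hu0 (hS u hu ?_)
  have hvu : u = -v := eq_of_norm_eq_of_norm_add_eq (by rwa [norm_neg])
    (by rwa [norm_neg, ← sub_eq_add_neg])
  rwa [hvu, neg_neg]

theorem NoDiametralPair.diam_inter_closedBall_lt [ProperSpace E] {S : Set E}
    (hS' : NoDiametralPair S) (hS : IsClosed S) {r : ℝ} (hr : 0 < r) :
    diam (S ∩ closedBall 0 r) < 2 * r := by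
  set K := S ∩ closedBall 0 r
  have hK : IsCompact K := (isCompact_closedBall 0 r).inter_left hS
  rcases K.eq_empty_or_nonempty with hempty | hne
  · simp [hempty, hr]
  obtain ⟨⟨u, v⟩, ⟨hu, hv⟩, hmax⟩ :=
    (hK.prod hK).exists_isMaxOn (hne.prod hne) continuous_dist.continuousOn
  have hdiam : diam K ≤ dist u v :=
    diam_le_of_forall_dist_le dist_nonneg fun a ha b hb => hmax (mk_mem_prod ha hb)
  have hur : ‖u‖ ≤ r := mem_closedBall_zero_iff.1 hu.2
  have hvr : ‖v‖ ≤ r := mem_closedBall_zero_iff.1 hv.2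
  refine hdiam.trans_lt ?_
  rw [dist_eq_norm]
  by_cases hsphere : ‖u‖ = r ∧ ‖v‖ = r
  · have hu0 : u ≠ 0 := norm_pos_iff.1 (hsphere.1 ▸ hr)
    calc ‖u - v‖ < ‖u‖ + ‖v‖ := hS' u hu.1 v hv.1 hu0 (hsphere.1.trans hsphere.2.symm)
      _ = 2 * r := by rw [hsphere.1, hsphere.2, two_mul]
  · have : ‖u‖ + ‖v‖ < 2 * r := by
      rw [not_and_or] at hsphere
      rcases hsphere with h | h
      · linarith [lt_of_le_of_ne hur h]
      · linarith [lt_of_le_of_ne hvr h]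
    exact (norm_sub_le u v).trans_lt this

theorem norm_sub_le_half_diam_of_reflect_mem [NormedSpace ℝ E] {X : Set E}
    (hX : IsBounded X) {c : E} (hc : ∀ x ∈ X, (2 : ℝ) • c - x ∈ X) {x : E}
    (hx : x ∈ X) : ‖x - c‖ ≤ diam X / 2 := by
  have h : dist x ((2 : ℝ) • c - x) = 2 * ‖x - c‖ := by
    rw [dist_eq_norm, show x - ((2 : ℝ) • c - x) = (2 : ℝ) • (x - c) by module,
      norm_smul_of_nonneg zero_le_two]
  linarith [dist_le_diam_of_mem hX hx (hc x hx)]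

variable (E) in
structure DiametralFreeCover (ι : Type*) where
  piece : ι → Set E
  isClosed_piece : ∀ k, IsClosed (piece k)
  exists_mem_piece : ∀ a, ∃ k, a ∈ piece k
  noDiametralPair_piece : ∀ k, NoDiametralPair (piece k)

namespace DiametralFreeCover

variable {ι κ : Type*}

def reindex (C : DiametralFreeCover E ι) (e : κ ≃ ι) : DiametralFreeCover E κ where
  piece k := C.piece (e k)
  isClosed_piece k := C.isClosed_piece (e k)
  exists_mem_piece a := by
    obtain ⟨k, hk⟩ := C.exists_mem_piece a
    exact ⟨e.symm k, by simpa using hk⟩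
  noDiametralPair_piece k := C.noDiametralPair_piece (e k)

theorem exists_iUnion_eq_diam_lt [NormedSpace ℝ E] [ProperSpace E]
    (C : DiametralFreeCover E ι) {X : Set E} (hX : IsBounded X) (hd : 0 < diam X) {c : E}
    (hc : ∀ x ∈ X, (2 : ℝ) • c - x ∈ X) :
    ∃ Y : ι → Set E, X = ⋃ k, Y k ∧ ∀ k, diam (Y k) < diam X := by
  refine ⟨fun k => X ∩ {x | x - c ∈ C.piece k}, ?_, fun k => ?_⟩
  · ext x
    simp only [mem_iUnion, mem_inter_iff, exists_and_left, iff_self_and]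
    exact fun _ => C.exists_mem_piece (x - c)
  · set K := C.piece k ∩ closedBall 0 (diam X / 2)
    have hK : IsBounded K := isBounded_closedBall.subset inter_subset_right
    refine lt_of_le_of_lt ?_ (((C.noDiametralPair_piece k).diam_inter_closedBall_lt
      (C.isClosed_piece k) (half_pos hd)).trans_eq (mul_div_cancel₀ _ two_ne_zero))
    refine diam_le_of_forall_dist_le diam_nonneg fun x hx y hy => ?_
    have hmem : ∀ z ∈ X ∩ {x | x - c ∈ C.piece k}, z - c ∈ K := fun z hz =>
      ⟨hz.2, mem_closedBall_zero_iff.2 (norm_sub_le_half_diam_of_reflect_mem hX hc hz.1)⟩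
    calc dist x y = dist (x - c) (y - c) := (dist_sub_right x y c).symm
      _ ≤ diam K := dist_le_diam_of_mem hK (hmem x hx) (hmem y hy)

def ofMaxFunctional [NormedSpace ℝ E] [StrictConvexSpace ℝ E] [Finite ι] [Nonempty ι]
    (f : ι → StrongDual ℝ E) (hf : ∀ a, (∀ j k, f j a = f k a) → a = 0) :
    DiametralFreeCover E ι where
  piece k := {a | ∀ j, f j a ≤ f k a}
  isClosed_piece k := by
    simpa only [ofPred_forall] using
      isClosed_iInter fun j => isClosed_le (f j).continuous (f k).continuous
  exists_mem_piece a := Finite.exists_max fun k => f k a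
  noDiametralPair_piece k := noDiametralPair_of_neg_mem_imp_eq_zero fun u hu hnu => by
    have hk : ∀ j, f j u = f k u := fun j => le_antisymm (hu j) (by simpa using hnu j)
    exact hf u fun i j => (hk i).trans (hk j).symm

end DiametralFreeCover

end NormedGroup

def signFlip (b : Bool) (x : ℝ) : ℝ := cond b x (-x)

theorem abs_signFlip (b : Bool) (x : ℝ) : |signFlip b x| = |x| := by
  cases b <;> simp [signFlip]

theorem signFlip_sub (b : Bool) (x y : ℝ) :
    signFlip b x - signFlip b y = signFlip b (x - y) := by
  cases b <;> simp [signFlip]; ring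

theorem exists_signFlip_eq_abs (x : ℝ) : ∃ b, signFlip b x = |x| := by
  rcases le_or_gt 0 x with h | h
  · exact ⟨true, by simp [signFlip, abs_of_nonneg h]⟩
  · exact ⟨false, by simp [signFlip, abs_of_neg h]⟩

theorem continuous_signFlip (b : Bool) : Continuous (signFlip b) := by
  cases b
  · exact continuous_neg
  · exact continuous_id

namespace PiLp

variable (ι : Type*) [Fintype ι]

noncomputable def simplexCover (p : ENNReal) [Fact (1 ≤ p)] (hp : 1 < p) (hp' : p ≠ ⊤) :
    DiametralFreeCover (PiLp p fun _ : ι => ℝ) (Option ι) :=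
  haveI := PiLp.strictConvexSpace (β := fun _ : ι => ℝ) hp hp'
  DiametralFreeCover.ofMaxFunctional
    (fun k => k.elim (-∑ i, PiLp.proj p (fun _ => ℝ) i) (PiLp.proj p (fun _ => ℝ)))
    fun a ha => by
      have hcoord : ∀ i, a i = -∑ j, a j := by simpa using fun i => ha (some i) none
      have hsum : ∑ j, a j = 0 := by
        have h := Finset.sum_congr rfl fun i (_ : i ∈ Finset.univ) => hcoord i
        rw [Finset.sum_const, Finset.card_univ, nsmul_eq_mul] at h
        nlinarith
      ext i
      simp [hcoord i, hsum]

noncomputable def axisConeCover [Nonempty ι] :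
    DiametralFreeCover (PiLp 1 fun _ : ι => ℝ) (Bool × ι) where
  piece k := {a | ∀ j, |a j| ≤ signFlip k.1 (a k.2)}
  isClosed_piece k := by
    rw [ofPred_forall]
    exact isClosed_iInter fun j =>
      isClosed_le (PiLp.continuous_apply 1 _ j).abs
        ((continuous_signFlip k.1).comp (PiLp.continuous_apply 1 _ k.2))
  exists_mem_piece a := by
    obtain ⟨i, hi⟩ := Finite.exists_max fun i => |a i|
    obtain ⟨b, hb⟩ := exists_signFlip_eq_abs (a i)
    exact ⟨(b, i), fun j => hb ▸ hi j⟩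
  noDiametralPair_piece k u hu v hv hu0 huv := by
    obtain ⟨b, i⟩ := k
    have hpeak : ∀ w : PiLp 1 (fun _ : ι => ℝ), (∀ j, |w j| ≤ signFlip b (w i)) →
        w ≠ 0 → 0 < signFlip b (w i) ∧ signFlip b (w i) = |w i| := by
      intro w hw hw0
      obtain ⟨j, hj⟩ : ∃ j, w j ≠ 0 := by
        by_contra! h
        exact hw0 (PiLp.ext h)
      refine ⟨(abs_pos.2 hj).trans_le (hw j), ?_⟩
      rw [← abs_signFlip b, abs_of_nonneg ((abs_nonneg _).trans (hw i))]
    obtain ⟨hu1, hu2⟩ := hpeak u hu hu0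
    obtain ⟨hv1, hv2⟩ := hpeak v hv (norm_pos_iff.1 (huv ▸ norm_pos_iff.2 hu0))
    simp only [PiLp.norm_eq_of_L1, Real.norm_eq_abs, PiLp.sub_apply, ← Finset.sum_add_distrib]
    refine Finset.sum_lt_sum (fun j _ => abs_sub _ _) ⟨i, Finset.mem_univ i, ?_⟩
    rw [← abs_signFlip b, ← signFlip_sub, ← hu2, ← hv2, abs_sub_lt_iff]
    constructor <;> linarith

noncomputable def orthantCover : DiametralFreeCover (PiLp ⊤ fun _ : ι => ℝ) (ι → Bool) where
  piece σ := {a | ∀ i, 0 ≤ signFlip (σ i) (a i)}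
  isClosed_piece σ := by
    rw [ofPred_forall]
    exact isClosed_iInter fun i =>
      isClosed_le continuous_const
        ((continuous_signFlip (σ i)).comp (PiLp.continuous_apply ⊤ _ i))
  exists_mem_piece a := by
    choose σ hσ using fun i => exists_signFlip_eq_abs (a i)
    exact ⟨σ, fun i => (hσ i).symm ▸ abs_nonneg _⟩
  noDiametralPair_piece σ u hu v hv hu0 huv := by
    have hv0 : 0 < ‖v‖ := huv ▸ norm_pos_iff.2 hu0
    suffices ‖u - v‖ ≤ ‖u‖ by linarith
    rw [← PiLp.norm_ofLp, pi_norm_le_iff_of_nonneg (norm_nonneg _)]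
    intro i
    have hui : |signFlip (σ i) (u i)| ≤ ‖u‖ :=
      (abs_signFlip _ _).trans_le (PiLp.norm_apply_le u i)
    have hvi : |signFlip (σ i) (v i)| ≤ ‖u‖ :=
      huv ▸ (abs_signFlip _ _).trans_le (PiLp.norm_apply_le v i)
    rw [WithLp.ofLp_sub, Pi.sub_apply, Real.norm_eq_abs, ← abs_signFlip (σ i), ← signFlip_sub,
      abs_sub_le_iff]
    rw [abs_of_nonneg (hu i)] at hui
    rw [abs_of_nonneg (hv i)] at hvi
    constructor <;> linarith [hu i, hv i]

end PiLp

/-- Yu–Zong: in the n-dimensional ℓ_p space (1 ≤ p ≤ ∞), every bounded centrally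
symmetric set of positive diameter can be written as a union of m subsets, each of
ℓ_p-diameter strictly smaller than that of X, where m = 2n if p = 1, m = n+1 if
1 < p < ∞, and m = 2^n if p = ∞. -/
theorem borsuk_lp_centrally_symmetric (n : ℕ) (p : ENNReal) [Fact (1 ≤ p)]
    (X : Set (PiLp p (fun _ : Fin n => ℝ))) (hX : Bornology.IsBounded X)
    (hd : 0 < Metric.diam X)
    (hsymm : ∃ c : PiLp p (fun _ : Fin n => ℝ), ∀ x ∈ X, (2 : ℝ) • c - x ∈ X) :
    ∃ Y : Fin (if p = 1 then 2 * n else if p = ⊤ then 2 ^ n else n + 1) →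
        Set (PiLp p (fun _ : Fin n => ℝ)),
      X = ⋃ i, Y i ∧ ∀ i, Metric.diam (Y i) < Metric.diam X := by
  obtain ⟨c, hc⟩ := hsymm
  suffices C : DiametralFreeCover (PiLp p fun _ : Fin n => ℝ)
      (Fin (if p = 1 then 2 * n else if p = ⊤ then 2 ^ n else n + 1)) from
    C.exists_iUnion_eq_diam_lt hX hd hc
  split_ifs with hp1 hptop
  · subst hp1
    cases n with
    | zero => exact absurd hd (diam_subsingleton (Set.subsingleton_of_subsingleton)).not_gt
    | succ n =>
      exact (PiLp.axisConeCover (Fin (n + 1))).reindex (Fintype.equivFinOfCardEq (by simp)).symm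
  · subst hptop
    exact (PiLp.orthantCover (Fin n)).reindex (Fintype.equivFinOfCardEq (by simp)).symm
  · exact (PiLp.simplexCover (Fin n) p (lt_of_le_of_ne Fact.out (Ne.symm hp1)) hptop).reindex
      (Fintype.equivFinOfCardEq (by simp)).symm
end
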